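/- arXiv:2208.06630 — 9 statements merged into one kernel-verified Lean document; each statement's English description precedes it below -/
import Mathlib

section
/- For every n ≥ 2 there exists a 2-reachability network on n elements of length ⌈3n/2⌉ − 2. -/
/-- The permutation of `ℕ` obtained by applying the transpositions in the list
in order (first element of the list applied first). -/
def netPerm (S : List (ℕ × ℕ)) : Equiv.Perm ℕ :=
  (S.map (fun p => Equiv.swap p.1 p.2)).reverse.prod

/-- `L` is a `t`-reachability network on the ground set `{1, …, n}`:
every entry is a transposition of two distinct points of `{1, …, n}`, and for every
choice of `t` distinct points `x 0, …, x (t-1)` of `{1, …, n}` there is a subsequence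
of `L` whose composition (applied in order) maps `j + 1` to `x j` for `0 ≤ j < t`
(i.e. maps the point `j` to `x_j` for `1 ≤ j ≤ t`). -/
def IsReachNet (n t : ℕ) (L : List (ℕ × ℕ)) : Prop :=
  (∀ p ∈ L, p.1 ∈ Finset.Icc 1 n ∧ p.2 ∈ Finset.Icc 1 n ∧ p.1 ≠ p.2) ∧
  ∀ x : Fin t → ℕ, (∀ j, x j ∈ Finset.Icc 1 n) → Function.Injective x →
    ∃ S : List (ℕ × ℕ), S.Sublist L ∧ ∀ j : Fin t, netPerm S (j.val + 1) = x j

/-- The recursive construction of a 2-reachability network. -/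
def net : ℕ → List (ℕ × ℕ)
  | 0 => []
  | 1 => []
  | 2 => [(1,2)]
  | 3 => [(2,3),(1,2),(2,3)]
  | (n+4) => net (n+2) ++ [(1,n+3),(2,n+4),(1,2)]

lemma netPerm_nil_apply (v : ℕ) : netPerm [] v = v := by simp [netPerm]

lemma netPerm_cons_apply (p : ℕ × ℕ) (S : List (ℕ × ℕ)) (v : ℕ) :
    netPerm (p :: S) v = netPerm S (Equiv.swap p.1 p.2 v) := by
  simp [netPerm, List.prod_append]

lemma netPerm_append_apply (S T : List (ℕ × ℕ)) (v : ℕ) :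
    netPerm (S ++ T) v = netPerm T (netPerm S v) := by
  simp [netPerm, List.prod_append]

/-- The key routing property. -/
def Good (n : ℕ) (L : List (ℕ × ℕ)) : Prop :=
  ∀ a b : ℕ, 1 ≤ a → a ≤ n → 1 ≤ b → b ≤ n → a ≠ b →
    ∃ S : List (ℕ × ℕ), S.Sublist L ∧ netPerm S 1 = a ∧ netPerm S 2 = b

section SublistHelpers

variable {α : Type*} (A B C : α)

lemma subA : List.Sublist [A] [A, B, C] := .cons₂ _ (.cons _ (.cons _ .slnil))
lemma subB : List.Sublist [B] [A, B, C] := .cons _ (.cons₂ _ (.cons _ .slnil))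
lemma subAB : List.Sublist [A, B] [A, B, C] := .cons₂ _ (.cons₂ _ (.cons _ .slnil))
lemma subAC : List.Sublist [A, C] [A, B, C] := .cons₂ _ (.cons _ (.cons₂ _ .slnil))
lemma subBC : List.Sublist [B, C] [A, B, C] := .cons _ (.cons₂ _ (.cons₂ _ .slnil))

end SublistHelpers

lemma good_net : ∀ n : ℕ, 2 ≤ n → Good n (net n) := by
  intro n
  induction n using Nat.strong_induction_on with
  | _ n ih =>
    rcases n with _|_|_|_|n
    · omega
    · omega
    · -- n = 2
      intro _ a b ha1 ha2 hb1 hb2 hab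
      interval_cases a <;> interval_cases b <;> simp_all
      · exact ⟨[], List.nil_sublist _, by simp [netPerm_nil_apply]⟩
      · exact ⟨[(1,2)], List.Sublist.refl _,
          by simp [netPerm_cons_apply, netPerm_nil_apply, Equiv.swap_apply_def]⟩
    · -- n = 3
      intro _ a b ha1 ha2 hb1 hb2 hab
      interval_cases a <;> interval_cases b <;> simp_all
      · exact ⟨[], List.nil_sublist _, by simp [netPerm_nil_apply]⟩
      · exact ⟨[(2,3)], subA _ _ _, by
          simp [netPerm_cons_apply, netPerm_nil_apply, Equiv.swap_apply_def]⟩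
      · exact ⟨[(1,2)], subB _ _ _, by
          simp [netPerm_cons_apply, netPerm_nil_apply, Equiv.swap_apply_def]⟩
      · exact ⟨[(2,3),(1,2)], subAB _ _ _, by
          simp [netPerm_cons_apply, netPerm_nil_apply, Equiv.swap_apply_def]⟩
      · exact ⟨[(1,2),(2,3)], subBC _ _ _, by
          simp [netPerm_cons_apply, netPerm_nil_apply, Equiv.swap_apply_def]⟩
      · exact ⟨[(2,3),(1,2),(2,3)], List.Sublist.refl _, by
          simp [netPerm_cons_apply, netPerm_nil_apply, Equiv.swap_apply_def]⟩
    · -- n + 4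
      intro _ a b ha1 ha2 hb1 hb2 hab
      have IH : Good (n+2) (net (n+2)) := ih (n+2) (by omega) (by omega)
      have hnet : net (n+4) = net (n+2) ++ [(1,n+3),(2,n+4),(1,2)] := by rfl
      rw [hnet]
      rcases eq_or_ne a (n+3) with rfl | han3
      · rcases eq_or_ne b (n+4) with rfl | hbn4
        · -- (n+3, n+4) : inner (1,2), suffix [A,B]
          obtain ⟨S, hS, h1, h2⟩ := IH 1 2 (by omega) (by omega) (by omega) (by omega) (by omega)
          refine ⟨S ++ [(1,n+3),(2,n+4)], hS.append (subAB _ _ _), ?_, ?_⟩ <;>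
            rw [netPerm_append_apply] <;> [rw [h1]; rw [h2]] <;>
            · simp only [netPerm_cons_apply, netPerm_nil_apply, Equiv.swap_apply_def]
              split_ifs <;> omega
        · rcases eq_or_ne b 1 with rfl | hb_1
          · -- (n+3, 1) : inner (1,2), suffix [A,C]
            obtain ⟨S, hS, h1, h2⟩ := IH 1 2 (by omega) (by omega) (by omega) (by omega) (by omega)
            refine ⟨S ++ [(1,n+3),(1,2)], hS.append (subAC _ _ _), ?_, ?_⟩ <;>
              rw [netPerm_append_apply] <;> [rw [h1]; rw [h2]] <;>
              · simp only [netPerm_cons_apply, netPerm_nil_apply, Equiv.swap_apply_def]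
                split_ifs <;> omega
          · -- (n+3, b), 2 ≤ b ≤ n+2 : inner (1,b), suffix [A]
            obtain ⟨S, hS, h1, h2⟩ := IH 1 b (by omega) (by omega) (by omega) (by omega) (by omega)
            refine ⟨S ++ [(1,n+3)], hS.append (subA _ _ _), ?_, ?_⟩ <;>
              rw [netPerm_append_apply] <;> [rw [h1]; rw [h2]] <;>
              · simp only [netPerm_cons_apply, netPerm_nil_apply, Equiv.swap_apply_def]
                split_ifs <;> omega
      rcases eq_or_ne a (n+4) with rfl | han4
      · rcases eq_or_ne b (n+3) with rfl | hbn3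
        · -- (n+4, n+3) : inner (2,1), suffix [A,B]
          obtain ⟨S, hS, h1, h2⟩ := IH 2 1 (by omega) (by omega) (by omega) (by omega) (by omega)
          refine ⟨S ++ [(1,n+3),(2,n+4)], hS.append (subAB _ _ _), ?_, ?_⟩ <;>
            rw [netPerm_append_apply] <;> [rw [h1]; rw [h2]] <;>
            · simp only [netPerm_cons_apply, netPerm_nil_apply, Equiv.swap_apply_def]
              split_ifs <;> omega
        · rcases eq_or_ne b 2 with rfl | hb_2
          · -- (n+4, 2) : inner (2,1), suffix [B,C]
            obtain ⟨S, hS, h1, h2⟩ := IH 2 1 (by omega) (by omega) (by omega) (by omega) (by omega)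
            refine ⟨S ++ [(2,n+4),(1,2)], hS.append (subBC _ _ _), ?_, ?_⟩ <;>
              rw [netPerm_append_apply] <;> [rw [h1]; rw [h2]] <;>
              · simp only [netPerm_cons_apply, netPerm_nil_apply, Equiv.swap_apply_def]
                split_ifs <;> omega
          · -- (n+4, b), b ≤ n+2, b ≠ 2 : inner (2,b), suffix [B]
            obtain ⟨S, hS, h1, h2⟩ := IH 2 b (by omega) (by omega) (by omega) (by omega) (by omega)
            refine ⟨S ++ [(2,n+4)], hS.append (subB _ _ _), ?_, ?_⟩ <;>
              rw [netPerm_append_apply] <;> [rw [h1]; rw [h2]] <;>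
              · simp only [netPerm_cons_apply, netPerm_nil_apply, Equiv.swap_apply_def]
                split_ifs <;> omega
      -- now a ≤ n+2
      have haN : a ≤ n + 2 := by omega
      rcases eq_or_ne b (n+3) with rfl | hbn3
      · rcases eq_or_ne a 1 with rfl | ha_1
        · -- (1, n+3) : inner (2,1), suffix [A,C]
          obtain ⟨S, hS, h1, h2⟩ := IH 2 1 (by omega) (by omega) (by omega) (by omega) (by omega)
          refine ⟨S ++ [(1,n+3),(1,2)], hS.append (subAC _ _ _), ?_, ?_⟩ <;>
            rw [netPerm_append_apply] <;> [rw [h1]; rw [h2]] <;>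
            · simp only [netPerm_cons_apply, netPerm_nil_apply, Equiv.swap_apply_def]
              split_ifs <;> omega
        · -- (a, n+3), a ≠ 1 : inner (a,1), suffix [A]
          obtain ⟨S, hS, h1, h2⟩ := IH a 1 (by omega) (by omega) (by omega) (by omega) (by omega)
          refine ⟨S ++ [(1,n+3)], hS.append (subA _ _ _), ?_, ?_⟩ <;>
            rw [netPerm_append_apply] <;> [rw [h1]; rw [h2]] <;>
            · simp only [netPerm_cons_apply, netPerm_nil_apply, Equiv.swap_apply_def]
              split_ifs <;> omega
      rcases eq_or_ne b (n+4) with rfl | hbn4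
      · rcases eq_or_ne a 2 with rfl | ha_2
        · -- (2, n+4) : inner (1,2), suffix [B,C]
          obtain ⟨S, hS, h1, h2⟩ := IH 1 2 (by omega) (by omega) (by omega) (by omega) (by omega)
          refine ⟨S ++ [(2,n+4),(1,2)], hS.append (subBC _ _ _), ?_, ?_⟩ <;>
            rw [netPerm_append_apply] <;> [rw [h1]; rw [h2]] <;>
            · simp only [netPerm_cons_apply, netPerm_nil_apply, Equiv.swap_apply_def]
              split_ifs <;> omega
        · -- (a, n+4), a ≠ 2 : inner (a,2), suffix [B]
          obtain ⟨S, hS, h1, h2⟩ := IH a 2 (by omega) (by omega) (by omega) (by omega) (by omega)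
          refine ⟨S ++ [(2,n+4)], hS.append (subB _ _ _), ?_, ?_⟩ <;>
            rw [netPerm_append_apply] <;> [rw [h1]; rw [h2]] <;>
            · simp only [netPerm_cons_apply, netPerm_nil_apply, Equiv.swap_apply_def]
              split_ifs <;> omega
      -- both a, b ≤ n+2
      obtain ⟨S, hS, h1, h2⟩ := IH a b (by omega) (by omega) (by omega) (by omega) hab
      exact ⟨S, hS.trans (List.sublist_append_left _ _), h1, h2⟩

lemma net_mem : ∀ n : ℕ, ∀ p ∈ net n,
    p.1 ∈ Finset.Icc 1 n ∧ p.2 ∈ Finset.Icc 1 n ∧ p.1 ≠ p.2 := by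
  intro n
  induction n using Nat.strong_induction_on with
  | _ n ih =>
    rcases n with _|_|_|_|n
    · simp [net]
    · simp [net]
    · intro p hp; simp [net] at hp; subst hp; simp [Finset.mem_Icc]
    · intro p hp
      simp only [net, List.mem_cons, List.not_mem_nil, or_false] at hp
      rcases hp with rfl | rfl | rfl <;> simp [Finset.mem_Icc]
    · intro p hp
      have hnet : net (n+4) = net (n+2) ++ [(1,n+3),(2,n+4),(1,2)] := rfl
      rw [hnet, List.mem_append] at hp
      rcases hp with hp | hp
      · obtain ⟨h1, h2, h3⟩ := ih (n+2) (by omega) p hp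
        simp only [Finset.mem_Icc] at *
        exact ⟨⟨h1.1, by omega⟩, ⟨h2.1, by omega⟩, h3⟩
      · simp only [List.mem_cons, List.not_mem_nil, or_false] at hp
        rcases hp with rfl | rfl | rfl <;> simp [Finset.mem_Icc]

lemma net_length : ∀ n : ℕ, 2 ≤ n → (net n).length = (3 * n + 1) / 2 - 2 := by
  intro n
  induction n using Nat.strong_induction_on with
  | _ n ih =>
    rcases n with _|_|_|_|n
    · omega
    · omega
    · intro _; rfl
    · intro _; rfl
    · intro _
      have hnet : net (n+4) = net (n+2) ++ [(1,n+3),(2,n+4),(1,2)] := rfl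
      rw [hnet, List.length_append]
      have := ih (n+2) (by omega) (by omega)
      rw [this]
      simp only [List.length_cons, List.length_nil]
      omega

/-- **Upper bound for 2-reachability.** For every `n ≥ 2` there exists a 2-reachability
network on `n` elements of length `⌈3n/2⌉ - 2`. -/
theorem exists_two_reachability_network (n : ℕ) (hn : 2 ≤ n) :
    ∃ L : List (ℕ × ℕ), IsReachNet n 2 L ∧ L.length = (3 * n + 1) / 2 - 2 := by
  refine ⟨net n, ⟨net_mem n, ?_⟩, net_length n hn⟩
  intro x hx hinj
  have hab : x 0 ≠ x 1 := fun h => by simpa using hinj h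
  have h0 := Finset.mem_Icc.mp (hx 0)
  have h1 := Finset.mem_Icc.mp (hx 1)
  obtain ⟨S, hS, hS1, hS2⟩ :=
    good_net n hn (x 0) (x 1) h0.1 h0.2 h1.1 h1.2 hab
  refine ⟨S, hS, fun j => ?_⟩
  fin_cases j
  · simpa using hS1
  · simpa using hS2
end

section
/- For every n ≥ 2, every 2-reachability network on n elements has length at least ⌈3n/2⌉ − 2. -/
namespace TwoReach

/-- The set of achievable (image of 1, image of 2) pairs over sublists of `M`. -/
def R (M : List (ℕ × ℕ)) : Set (ℕ × ℕ) :=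
  {p | ∃ S : List (ℕ × ℕ), S.Sublist M ∧ netPerm S 1 = p.1 ∧ netPerm S 2 = p.2}

/-- support of a pair set -/
def spt (P : Set (ℕ × ℕ)) : Set ℕ := {x | ∃ p ∈ P, p.1 = x ∨ p.2 = x}

/-- pairwise complete finset -/
def PWC (P : Set (ℕ × ℕ)) (W : Finset ℕ) : Prop :=
  ∀ x ∈ W, ∀ y ∈ W, x ≠ y → ((x : ℕ), (y : ℕ)) ∈ P

/-- first coordinates and second coordinates are disjoint -/
def disjQ (P : Set (ℕ × ℕ)) : Prop :=
  ∀ x : ℕ, (∃ q, (x, q) ∈ P) → (∃ q, (q, x) ∈ P) → False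

lemma netPerm_nil : netPerm [] = 1 := rfl

lemma netPerm_concat (S : List (ℕ × ℕ)) (e : ℕ × ℕ) :
    netPerm (S ++ [e]) = Equiv.swap e.1 e.2 * netPerm S := by
  unfold netPerm; simp

lemma mem_R_nil {p : ℕ × ℕ} : p ∈ R [] ↔ p = (1, 2) := by
  constructor
  · rintro ⟨S, hS, h1, h2⟩
    rw [List.sublist_nil] at hS
    subst hS
    have e1 : netPerm [] 1 = 1 := rfl
    have e2 : netPerm [] 2 = 2 := rfl
    rw [e1] at h1; rw [e2] at h2
    ext <;> simp [← h1, ← h2]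
  · rintro rfl
    exact ⟨[], List.Sublist.refl _, rfl, rfl⟩

lemma mem_R_concat {M : List (ℕ × ℕ)} {e : ℕ × ℕ} {x y : ℕ} :
    (x, y) ∈ R (M ++ [e]) ↔
      (x, y) ∈ R M ∨ (Equiv.swap e.1 e.2 x, Equiv.swap e.1 e.2 y) ∈ R M := by
  constructor
  · rintro ⟨S, hS, h1, h2⟩
    rw [List.sublist_append_iff] at hS
    obtain ⟨S₁, S₂, rfl, hS₁, hS₂⟩ := hS
    rw [List.sublist_singleton] at hS₂
    rcases hS₂ with rfl | rfl
    · left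
      rw [List.append_nil] at h1 h2
      exact ⟨S₁, hS₁, h1, h2⟩
    · right
      rw [netPerm_concat] at h1 h2
      refine ⟨S₁, hS₁, ?_, ?_⟩
      · simp only [Equiv.Perm.mul_apply] at h1
        rw [← h1, Equiv.swap_apply_self]
      · simp only [Equiv.Perm.mul_apply] at h2
        rw [← h2, Equiv.swap_apply_self]
  · rintro (⟨S, hS, h1, h2⟩ | ⟨S, hS, h1, h2⟩)
    · exact ⟨S, hS.trans (List.sublist_append_left _ _), h1, h2⟩
    · refine ⟨S ++ [e], hS.append (List.Sublist.refl _), ?_, ?_⟩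
      · rw [netPerm_concat, Equiv.Perm.mul_apply, h1, Equiv.swap_apply_self]
      · rw [netPerm_concat, Equiv.Perm.mul_apply, h2, Equiv.swap_apply_self]

lemma R_mono {M : List (ℕ × ℕ)} {e : ℕ × ℕ} {p : ℕ × ℕ} (h : p ∈ R M) :
    p ∈ R (M ++ [e]) := by
  obtain ⟨x, y⟩ := p
  exact mem_R_concat.mpr (Or.inl h)


lemma spt_mem {P : Set (ℕ × ℕ)} {x : ℕ} :
    x ∈ spt P ↔ ∃ p ∈ P, p.1 = x ∨ p.2 = x := Iff.rfl

/-- Debut step: `a` is in the support, `b` is not. -/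
lemma debut_step {M : List (ℕ × ℕ)} {e : ℕ × ℕ} {a b : ℕ} (hab : a ≠ b)
    (hse : Equiv.swap e.1 e.2 = Equiv.swap a b)
    (ha : a ∈ spt (R M)) (hb : b ∉ spt (R M)) :
    spt (R (M ++ [e])) = insert b (spt (R M)) ∧
    (∀ W : Finset ℕ, PWC (R (M ++ [e])) W →
      ∃ W' : Finset ℕ, PWC (R M) W' ∧ W'.card = W.card) ∧
    (disjQ (R M) → disjQ (R (M ++ [e]))) := by
  set σ := Equiv.swap a b with hσ
  have hRc : ∀ x y : ℕ, (x, y) ∈ R (M ++ [e]) ↔ ((x, y) ∈ R M ∨ (σ x, σ y) ∈ R M) := by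
    intro x y
    rw [mem_R_concat, hse]
  have hσσ : ∀ x : ℕ, σ (σ x) = x := fun x => Equiv.swap_apply_self a b x
  have hσa : σ a = b := Equiv.swap_apply_left a b
  have hσb : σ b = a := Equiv.swap_apply_right a b
  have hfix : ∀ x : ℕ, x ≠ a → x ≠ b → σ x = x := fun x h1 h2 =>
    Equiv.swap_apply_of_ne_of_ne h1 h2
  have bfree : ∀ x y : ℕ, (x, y) ∈ R M → x ≠ b ∧ y ≠ b := by
    intro x y h
    constructor
    · intro hxb; exact hb ⟨(x, y), h, Or.inl hxb⟩
    · intro hyb; exact hb ⟨(x, y), h, Or.inr hyb⟩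
  refine ⟨?_, ?_, ?_⟩
  · -- support grows by exactly b
    ext x
    simp only [spt_mem, Finset.coe_insert, Set.mem_insert_iff]
    constructor
    · rintro ⟨⟨u, v⟩, hp, hc⟩
      rcases (hRc u v).1 hp with h | h
      · exact Or.inr ⟨(u, v), h, hc⟩
      · -- (σ u, σ v) ∈ R M
        have hua : u ≠ a := by
          rintro rfl
          rw [hσa] at h
          exact ((bfree _ _ h).1 rfl).elim
        have hva : v ≠ a := by
          rintro rfl
          rw [hσa] at h
          exact ((bfree _ _ h).2 rfl).elim
        rcases hc with rfl | rfl
        · by_cases hub : u = b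
          · exact Or.inl hub
          · rw [hfix u hua hub] at h
            exact Or.inr ⟨(u, σ v), h, Or.inl rfl⟩
        · by_cases hvb : v = b
          · exact Or.inl hvb
          · rw [hfix v hva hvb] at h
            exact Or.inr ⟨(σ u, v), h, Or.inr rfl⟩
    · rintro (hxb | ⟨p, hp, hc⟩)
      · -- b in the new support
        subst hxb
        obtain ⟨⟨u, v⟩, hp, hc⟩ := ha
        have himg : (σ u, σ v) ∈ R (M ++ [e]) := by
          rw [hRc]
          right
          rw [hσσ, hσσ]
          exact hp
        rcases hc with hc | hc
        · refine ⟨(σ u, σ v), himg, Or.inl ?_⟩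
          simp only at hc
          rw [hc] at *
          exact hσa
        · refine ⟨(σ u, σ v), himg, Or.inr ?_⟩
          simp only at hc
          rw [hc] at *
          exact hσa
      · exact ⟨p, by obtain ⟨u, v⟩ := p; exact (hRc u v).2 (Or.inl hp), hc⟩
  · -- PWC transfer
    intro W hW
    by_cases hbW : b ∈ W
    · have haW : a ∉ W := by
        intro haW
        have h := hW a haW b hbW hab
        rcases (hRc a b).1 h with h' | h'
        · exact (bfree _ _ h').2 rfl
        · rw [hσa, hσb] at h'
          exact (bfree _ _ h').1 rfl
      refine ⟨insert a (W.erase b), ?_, ?_⟩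
      · intro x hx y hy hxy
        rcases Finset.mem_insert.1 hx with hxeq | hx'
        · rcases Finset.mem_insert.1 hy with hyeq | hy'
          · exact (hxy (hxeq.trans hyeq.symm)).elim
          · -- x = a, y ∈ W.erase b
            have hyW := Finset.mem_of_mem_erase hy'
            have hyb := Finset.ne_of_mem_erase hy'
            have hya : y ≠ a := fun h => haW (h ▸ hyW)
            have h := hW b hbW y hyW (fun h => hyb h.symm)
            rcases (hRc b y).1 h with h' | h'
            · exact ((bfree _ _ h').1 rfl).elim
            · rw [hσb, hfix y hya hyb] at h'
              rw [hxeq]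
              exact h'
        · rcases Finset.mem_insert.1 hy with hyeq | hy'
          · -- y = a, x ∈ W.erase b
            have hxW := Finset.mem_of_mem_erase hx'
            have hxb := Finset.ne_of_mem_erase hx'
            have hxa : x ≠ a := fun h => haW (h ▸ hxW)
            have h := hW x hxW b hbW hxb
            rcases (hRc x b).1 h with h' | h'
            · exact ((bfree _ _ h').2 rfl).elim
            · rw [hσb, hfix x hxa hxb] at h'
              rw [hyeq]
              exact h'
          · have hxW := Finset.mem_of_mem_erase hx'
            have hxb := Finset.ne_of_mem_erase hx'
            have hxa : x ≠ a := fun h => haW (h ▸ hxW)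
            have hyW := Finset.mem_of_mem_erase hy'
            have hyb := Finset.ne_of_mem_erase hy'
            have hya : y ≠ a := fun h => haW (h ▸ hyW)
            have h := hW x hxW y hyW hxy
            rcases (hRc x y).1 h with h' | h'
            · exact h'
            · rw [hfix x hxa hxb, hfix y hya hyb] at h'
              exact h'
      · have h1 : a ∉ W.erase b := fun h => haW (Finset.mem_of_mem_erase h)
        rw [Finset.card_insert_of_notMem h1, Finset.card_erase_of_mem hbW]
        have : 1 ≤ W.card := Finset.card_pos.2 ⟨b, hbW⟩
        omega
    · refine ⟨W, ?_, rfl⟩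
      intro x hx y hy hxy
      have hxb : x ≠ b := fun h => hbW (h ▸ hx)
      have hyb : y ≠ b := fun h => hbW (h ▸ hy)
      have h := hW x hx y hy hxy
      rcases (hRc x y).1 h with h' | h'
      · exact h'
      · by_cases hxa : x = a
        · rw [hxa, hσa] at h'
          exact ((bfree _ _ h').1 rfl).elim
        · by_cases hya : y = a
          · rw [hya, hσa] at h'
            exact ((bfree _ _ h').2 rfl).elim
          · rw [hfix x hxa hxb, hfix y hya hyb] at h'
            exact h'
  · -- disjQ transfer
    intro hd x ⟨q, hq⟩ ⟨q', hq'⟩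
    have F1 : x ∈ {z : ℕ | ∃ w, (z, w) ∈ R M} ∨ σ x ∈ {z : ℕ | ∃ w, (z, w) ∈ R M} := by
      rcases (hRc x q).1 hq with h | h
      · exact Or.inl ⟨q, h⟩
      · exact Or.inr ⟨σ q, h⟩
    have F2 : x ∈ {z : ℕ | ∃ w, (w, z) ∈ R M} ∨ σ x ∈ {z : ℕ | ∃ w, (w, z) ∈ R M} := by
      rcases (hRc q' x).1 hq' with h | h
      · exact Or.inl ⟨q', h⟩
      · exact Or.inr ⟨σ q', h⟩
    by_cases hxa : x = a
    · rw [hxa, hσa] at F1 F2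
      have G1 : ∃ w, (a, w) ∈ R M := by
        rcases F1 with h | h
        · exact h
        · obtain ⟨w, hw⟩ := h
          exact ((bfree _ _ hw).1 rfl).elim
      have G2 : ∃ w, (w, a) ∈ R M := by
        rcases F2 with h | h
        · exact h
        · obtain ⟨w, hw⟩ := h
          exact ((bfree _ _ hw).2 rfl).elim
      exact hd a G1 G2
    · by_cases hxb : x = b
      · rw [hxb, hσb] at F1 F2
        have G1 : ∃ w, (a, w) ∈ R M := by
          rcases F1 with h | h
          · obtain ⟨w, hw⟩ := h
            exact ((bfree _ _ hw).1 rfl).elim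
          · exact h
        have G2 : ∃ w, (w, a) ∈ R M := by
          rcases F2 with h | h
          · obtain ⟨w, hw⟩ := h
            exact ((bfree _ _ hw).2 rfl).elim
          · exact h
        exact hd a G1 G2
      · rw [hfix x hxa hxb] at F1 F2
        have G1 : ∃ w, (x, w) ∈ R M := by
          rcases F1 with h | h
          · exact h
          · exact h
        have G2 : ∃ w, (w, x) ∈ R M := by
          rcases F2 with h | h
          · exact h
          · exact h
        exact hd x G1 G2

/-- The key induction. -/
lemma main_lemma (M : List (ℕ × ℕ)) (hM : ∀ p ∈ M, p.1 ≠ p.2) :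
    ∃ (d y : ℕ) (U : Finset ℕ),
      d + y ≤ M.length ∧ U.card = d + 2 ∧ spt (R M) = ↑U ∧
      (∀ W : Finset ℕ, PWC (R M) W → W.card ≤ max 1 (2 * y)) ∧
      (y = 0 → disjQ (R M)) := by
  induction M using List.reverseRecOn with
  | nil =>
      refine ⟨0, 0, {1, 2}, by simp, by simp, ?_, ?_, ?_⟩
      · ext x
        simp only [spt, Set.mem_setOf_eq, Finset.coe_insert, Finset.coe_singleton,
          Set.mem_insert_iff, Set.mem_singleton_iff]
        constructor
        · rintro ⟨p, hp, h⟩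
          rw [mem_R_nil] at hp
          subst hp
          rcases h with h | h <;> simp_all
        · rintro (rfl | rfl)
          · exact ⟨(1, 2), mem_R_nil.mpr rfl, Or.inl rfl⟩
          · exact ⟨(1, 2), mem_R_nil.mpr rfl, Or.inr rfl⟩
      · intro W hW
        have : W.card ≤ 1 := by
          apply Finset.card_le_one.mpr
          intro u hu v hv
          by_contra huv
          have h1 := hW u hu v hv huv
          have h2 := hW v hv u hu (Ne.symm huv)
          rw [mem_R_nil] at h1 h2
          have : u = 1 := by simpa using congrArg Prod.fst h1
          have : v = 1 := by simpa using congrArg Prod.fst h2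
          simp_all
        omega
      · intro _
        intro x ⟨q, hq⟩ ⟨q', hq'⟩
        rw [mem_R_nil] at hq hq'
        have : x = 1 := by simpa using congrArg Prod.fst hq
        have : x = 2 := by simpa using congrArg Prod.snd hq'
        omega
  | append_singleton M e ih =>
      obtain ⟨d, y, U, hlen, hcard, hspt, hPWC, hdisj⟩ :=
        ih (fun p hp => hM p (List.mem_append_left _ hp))
      have habe : e.1 ≠ e.2 := hM e (List.mem_append_right _ (List.mem_singleton_self e))
      by_cases ha : e.1 ∈ spt (R M) <;> by_cases hb : e.2 ∈ spt (R M)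
      · -- CORE case
        set σ := Equiv.swap e.1 e.2 with hσ
        have hRc : ∀ x y : ℕ, (x, y) ∈ R (M ++ [e]) ↔
            ((x, y) ∈ R M ∨ (σ x, σ y) ∈ R M) := fun x y => mem_R_concat
        have hfix : ∀ x : ℕ, x ≠ e.1 → x ≠ e.2 → σ x = x := fun x h1 h2 =>
          Equiv.swap_apply_of_ne_of_ne h1 h2
        have hspt' : spt (R (M ++ [e])) = spt (R M) := by
          apply Set.Subset.antisymm
          · rintro x ⟨⟨u, v⟩, hp, hc⟩
            rcases (hRc u v).1 hp with h | h
            · exact ⟨(u, v), h, hc⟩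
            · by_cases hu1 : u = e.1
              · by_cases hv2' : v = e.2
                · rcases hc with hc | hc
                  · rw [← hc, hu1]; exact ha
                  · rw [← hc, hv2']; exact hb
                · by_cases hv1 : v = e.1
                  · rcases hc with hc | hc
                    · rw [← hc, hu1]; exact ha
                    · rw [← hc, hv1]; exact ha
                  · rcases hc with hc | hc
                    · rw [← hc, hu1]; exact ha
                    · rw [← hc]
                      rw [hfix v hv1 hv2'] at h
                      exact ⟨(σ u, v), h, Or.inr rfl⟩
              · by_cases hu2 : u = e.2
                · rcases hc with hc | hc
                  · rw [← hc, hu2]; exact hb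
                  · by_cases hv1 : v = e.1
                    · rw [← hc, hv1]; exact ha
                    · by_cases hv2' : v = e.2
                      · rw [← hc, hv2']; exact hb
                      · rw [← hc]
                        rw [hfix v hv1 hv2'] at h
                        exact ⟨(σ u, v), h, Or.inr rfl⟩
                · rw [hfix u hu1 hu2] at h
                  rcases hc with hc | hc
                  · exact ⟨(u, σ v), h, Or.inl hc⟩
                  · by_cases hv1 : v = e.1
                    · rw [← hc, hv1]; exact ha
                    · by_cases hv2' : v = e.2
                      · rw [← hc, hv2']; exact hb
                      · rw [hfix v hv1 hv2'] at h
                        exact ⟨(u, v), h, Or.inr hc⟩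
          · rintro x ⟨p, hp, hc⟩
            exact ⟨p, R_mono hp, hc⟩
        refine ⟨d, y + 1, U, ?_, hcard, by rw [hspt']; exact hspt, ?_, ?_⟩
        · simp only [List.length_append, List.length_singleton]; omega
        · intro W hW
          rcases Nat.eq_zero_or_pos y with hy0 | hy1
          · -- first core: no complete couples before, Q-disjointness
            subst hy0
            have hd := hdisj rfl
            have pairclaim : ∀ x ∈ W, ∀ z ∈ W, x ≠ z →
                (x = e.1 ∧ z = e.2) ∨ (x = e.2 ∧ z = e.1) := by
              intro x hx z hz hxz
              have h1 := hW x hx z hz hxz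
              have h2 := hW z hz x hx (Ne.symm hxz)
              rcases (hRc x z).1 h1 with h1' | h1' <;>
                rcases (hRc z x).1 h2 with h2' | h2'
              · exact absurd (hd x ⟨z, h1'⟩ ⟨z, h2'⟩) (by simp)
              · -- (x,z) ∈ R M and (σ z, σ x) ∈ R M
                have hx12 : x = e.1 ∨ x = e.2 := by
                  by_contra hcon
                  push_neg at hcon
                  rw [hfix x hcon.1 hcon.2] at h2'
                  exact hd x ⟨z, h1'⟩ ⟨σ z, h2'⟩
                have hz12 : z = e.1 ∨ z = e.2 := by
                  by_contra hcon
                  push_neg at hcon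
                  rw [hfix z hcon.1 hcon.2] at h2'
                  exact hd z ⟨σ x, h2'⟩ ⟨x, h1'⟩
                rcases hx12 with hx1 | hx2
                · rcases hz12 with hz1 | hz2
                  · exact absurd (hx1.trans hz1.symm) hxz
                  · exact Or.inl ⟨hx1, hz2⟩
                · rcases hz12 with hz1 | hz2
                  · exact Or.inr ⟨hx2, hz1⟩
                  · exact absurd (hx2.trans hz2.symm) hxz
              · -- (σ x, σ z) ∈ R M and (z,x) ∈ R M
                have hx12 : x = e.1 ∨ x = e.2 := by
                  by_contra hcon
                  push_neg at hcon
                  rw [hfix x hcon.1 hcon.2] at h1'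
                  exact hd x ⟨σ z, h1'⟩ ⟨z, h2'⟩
                have hz12 : z = e.1 ∨ z = e.2 := by
                  by_contra hcon
                  push_neg at hcon
                  rw [hfix z hcon.1 hcon.2] at h1'
                  exact hd z ⟨x, h2'⟩ ⟨σ x, h1'⟩
                rcases hx12 with hx1 | hx2
                · rcases hz12 with hz1 | hz2
                  · exact absurd (hx1.trans hz1.symm) hxz
                  · exact Or.inl ⟨hx1, hz2⟩
                · rcases hz12 with hz1 | hz2
                  · exact Or.inr ⟨hx2, hz1⟩
                  · exact absurd (hx2.trans hz2.symm) hxz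
              · exact absurd (hd (σ x) ⟨σ z, h1'⟩ ⟨σ z, h2'⟩) (by simp)
            have hW2 : W.card ≤ 2 := by
              by_contra hcon
              push_neg at hcon
              obtain ⟨x, hx, z, hz, w, hw, hxz, hxw, hzw⟩ := Finset.two_lt_card.1 hcon
              rcases pairclaim x hx z hz hxz with ⟨p1, p2⟩ | ⟨p1, p2⟩ <;>
                rcases pairclaim x hx w hw hxw with ⟨q1, q2⟩ | ⟨q1, q2⟩
              · exact hzw (p2.trans q2.symm)
              · exact (habe (p1.symm.trans q1)).elim
              · exact (habe (q1.symm.trans p1)).elim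
              · exact hzw (p2.trans q2.symm)
            omega
          · -- later core
            have hstep : ∀ x ∈ (W.erase e.1).erase e.2, ∀ z ∈ (W.erase e.1).erase e.2,
                x ≠ z → (x, z) ∈ R M := by
              intro x hx z hz hxz
              have hx2 := Finset.ne_of_mem_erase hx
              have hx1 := Finset.ne_of_mem_erase (Finset.mem_of_mem_erase hx)
              have hxW := Finset.mem_of_mem_erase (Finset.mem_of_mem_erase hx)
              have hz2 := Finset.ne_of_mem_erase hz
              have hz1 := Finset.ne_of_mem_erase (Finset.mem_of_mem_erase hz)
              have hzW := Finset.mem_of_mem_erase (Finset.mem_of_mem_erase hz)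
              have h := hW x hxW z hzW hxz
              rcases (hRc x z).1 h with h' | h'
              · exact h'
              · rw [hfix x hx1 hx2, hfix z hz1 hz2] at h'
                exact h'
            have hb1 := hPWC _ hstep
            have hc1 : W.card ≤ ((W.erase e.1).erase e.2).card + 2 := by
              have e1 : W.card ≤ (W.erase e.1).card + 1 := by
                by_cases h : e.1 ∈ W
                · rw [Finset.card_erase_of_mem h]
                  have : 1 ≤ W.card := Finset.card_pos.2 ⟨_, h⟩
                  omega
                · rw [Finset.erase_eq_of_notMem h]
                  omega
              have e2 : (W.erase e.1).card ≤ ((W.erase e.1).erase e.2).card + 1 := by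
                by_cases h : e.2 ∈ W.erase e.1
                · rw [Finset.card_erase_of_mem h]
                  have : 1 ≤ (W.erase e.1).card := Finset.card_pos.2 ⟨_, h⟩
                  omega
                · rw [Finset.erase_eq_of_notMem h]
                  omega
              omega
            have : max 1 (2 * y) = 2 * y := by omega
            rw [this] at hb1
            have : max 1 (2 * (y + 1)) = 2 * (y + 1) := by omega
            rw [this]
            omega
        · intro h; omega
      · -- DEBUT case: e.1 in support, e.2 not
        obtain ⟨h1, h2, h3⟩ := debut_step habe rfl ha hb
        refine ⟨d + 1, y, insert e.2 U, ?_, ?_, ?_, ?_, ?_⟩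
        · simp only [List.length_append, List.length_singleton]; omega
        · rw [Finset.card_insert_of_notMem (fun hc => hb (hspt ▸ Finset.mem_coe.2 hc))]
          omega
        · rw [h1, hspt]
          simp
        · intro W hW
          obtain ⟨W', hW', hcardW⟩ := h2 W hW
          rw [← hcardW]
          exact hPWC W' hW'
        · intro hy
          exact h3 (hdisj hy)
      · -- DEBUT case: e.2 in support, e.1 not
        obtain ⟨h1, h2, h3⟩ := debut_step (Ne.symm habe) (Equiv.swap_comm e.1 e.2) hb ha
        refine ⟨d + 1, y, insert e.1 U, ?_, ?_, ?_, ?_, ?_⟩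
        · simp only [List.length_append, List.length_singleton]; omega
        · rw [Finset.card_insert_of_notMem (fun hc => ha (hspt ▸ Finset.mem_coe.2 hc))]
          omega
        · rw [h1, hspt]
          simp
        · intro W hW
          obtain ⟨W', hW', hcardW⟩ := h2 W hW
          rw [← hcardW]
          exact hPWC W' hW'
        · intro hy
          exact h3 (hdisj hy)
      · -- JUNK case
        have hRR : R (M ++ [e]) = R M := by
          apply Set.Subset.antisymm
          · rintro ⟨u, v⟩ hp
            rcases mem_R_concat.1 hp with h | h
            · exact h
            · have hu : Equiv.swap e.1 e.2 u ≠ e.1 ∧ Equiv.swap e.1 e.2 u ≠ e.2 := by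
                constructor
                · intro hc; exact ha ⟨_, h, Or.inl hc⟩
                · intro hc; exact hb ⟨_, h, Or.inl hc⟩
              have hv : Equiv.swap e.1 e.2 v ≠ e.1 ∧ Equiv.swap e.1 e.2 v ≠ e.2 := by
                constructor
                · intro hc; exact ha ⟨_, h, Or.inr hc⟩
                · intro hc; exact hb ⟨_, h, Or.inr hc⟩
              have hu' : Equiv.swap e.1 e.2 (Equiv.swap e.1 e.2 u) = Equiv.swap e.1 e.2 u :=
                Equiv.swap_apply_of_ne_of_ne hu.1 hu.2
              have hv' : Equiv.swap e.1 e.2 (Equiv.swap e.1 e.2 v) = Equiv.swap e.1 e.2 v :=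
                Equiv.swap_apply_of_ne_of_ne hv.1 hv.2
              rw [Equiv.swap_apply_self] at hu' hv'
              rwa [← hu', ← hv'] at h
          · intro p hp
            exact R_mono hp
        refine ⟨d, y, U, ?_, hcard, by rw [hRR]; exact hspt, ?_, ?_⟩
        · simp only [List.length_append, List.length_singleton]; omega
        · intro W hW
          rw [hRR] at hW
          exact hPWC W hW
        · intro hy
          rw [hRR]
          exact hdisj hy


lemma pair_mem (n : ℕ) (L : List (ℕ × ℕ)) (hL : IsReachNet n 2 L)
    {v u : ℕ} (hv : v ∈ Finset.Icc 1 n) (hu : u ∈ Finset.Icc 1 n) (hvu : v ≠ u) :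
    (v, u) ∈ R L := by
  have hj : ∀ j : Fin 2, (![v, u] : Fin 2 → ℕ) j ∈ Finset.Icc 1 n := by
    intro j
    simp only [Finset.mem_Icc] at hv hu
    fin_cases j <;> simp [Finset.mem_Icc] <;> omega
  have hinj : Function.Injective (![v, u] : Fin 2 → ℕ) := by
    intro j k h
    fin_cases j <;> fin_cases k <;> simp_all
  obtain ⟨S, hS, hval⟩ := hL.2 ![v, u] hj hinj
  have h0 := hval 0
  have h1 := hval 1
  simp only [Fin.val_zero, Fin.val_one, Matrix.cons_val_zero, Matrix.cons_val_one,
    Matrix.head_cons] at h0 h1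
  exact ⟨S, hS, h0, h1⟩

end TwoReach


/-- **Lower bound for 2-reachability.** For every `n ≥ 2`, every 2-reachability network
on `n` elements has length at least `⌈3n/2⌉ - 2`. -/
theorem two_reachability_lower_bound (n : ℕ) (hn : 2 ≤ n)
    (L : List (ℕ × ℕ)) (hL : IsReachNet n 2 L) :
    (3 * n + 1) / 2 - 2 ≤ L.length := by
  classical
  obtain ⟨d, y, U, hlen, hcard, hspt, hPWC, _⟩ :=
    TwoReach.main_lemma L (fun p hp => (hL.1 p hp).2.2)
  have h1n : (1 : ℕ) ∈ Finset.Icc 1 n := by simp; omega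
  have h2n : (2 : ℕ) ∈ Finset.Icc 1 n := by simp; omega
  -- support contains Icc 1 n
  have hsub : Finset.Icc 1 n ⊆ U := by
    intro v hv
    have : v ∈ TwoReach.spt (TwoReach.R L) := by
      by_cases hv1 : v = 1
      · exact ⟨(v, 2), TwoReach.pair_mem n L hL hv h2n (by omega), Or.inl rfl⟩
      · exact ⟨(v, 1), TwoReach.pair_mem n L hL hv h1n hv1, Or.inl rfl⟩
    rw [hspt] at this
    exact Finset.mem_coe.1 this
  have hnU : n ≤ U.card := by
    have := Finset.card_le_card hsub
    rwa [Nat.card_Icc, Nat.add_sub_cancel] at this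
  -- Icc 1 n is pairwise complete
  have hpwc : TwoReach.PWC (TwoReach.R L) (Finset.Icc 1 n) := fun x hx z hz hxz =>
    TwoReach.pair_mem n L hL hx hz hxz
  have hn2 := hPWC _ hpwc
  rw [Nat.card_Icc, Nat.add_sub_cancel] at hn2
  have hy : n ≤ 2 * y := by
    rcases Nat.eq_zero_or_pos y with h0 | h1
    · subst h0
      simp at hn2
      omega
    · have : (1 : ℕ) ≤ 2 * y := by omega
      rwa [Nat.max_eq_right this] at hn2
  omega
end

section
/- For every even n ≥ 2, the sequence of transpositions consisting of (1,2), followed by (1,x) for all odd x with 3 ≤ x ≤ n in increasing order, followed by (2,y) for all even y with 4 ≤ y ≤ n in increasing order, followed by (x,x+1) for all odd x with 3 ≤ x ≤ n−1 in increasing order, is a 2-reachability network on n elements; for odd n ≥ 3, appending the transposition (1,2) at the end of this sequence yields a 2-reachability network on n elements. -/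
/-- The sequence of transpositions `(1,2)`, then `(1,x)` for odd `3 ≤ x ≤ n` in
increasing order, then `(2,y)` for even `4 ≤ y ≤ n` in increasing order, then
`(x, x+1)` for odd `3 ≤ x ≤ n - 1` in increasing order. -/
def reachSeq (n : ℕ) : List (ℕ × ℕ) :=
  ((1 : ℕ), (2 : ℕ)) ::
    (((List.range (n + 1)).filter (fun x => x % 2 = 1 ∧ 3 ≤ x)).map (fun x => ((1 : ℕ), x)) ++
     ((List.range (n + 1)).filter (fun y => y % 2 = 0 ∧ 4 ≤ y)).map (fun y => ((2 : ℕ), y)) ++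
     ((List.range n).filter (fun x => x % 2 = 1 ∧ 3 ≤ x)).map (fun x => (x, x + 1)))

lemma netPerm_nil : netPerm [] = 1 := rfl

lemma netPerm_cons (p : ℕ × ℕ) (S : List (ℕ × ℕ)) :
    netPerm (p :: S) = netPerm S * Equiv.swap p.1 p.2 := by
  simp [netPerm, List.reverse_cons]

def lA (n : ℕ) : List (ℕ × ℕ) :=
  ((List.range (n + 1)).filter (fun x => x % 2 = 1 ∧ 3 ≤ x)).map (fun x => ((1 : ℕ), x))
def lB (n : ℕ) : List (ℕ × ℕ) :=
  ((List.range (n + 1)).filter (fun y => y % 2 = 0 ∧ 4 ≤ y)).map (fun y => ((2 : ℕ), y))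
def lC (n : ℕ) : List (ℕ × ℕ) :=
  ((List.range n).filter (fun x => x % 2 = 1 ∧ 3 ≤ x)).map (fun x => (x, x + 1))

lemma build (n : ℕ) (T S0 S1 S2 S3 S4 : List (ℕ × ℕ))
    (h0 : S0.Sublist [((1:ℕ),(2:ℕ))]) (h1 : S1.Sublist (lA n)) (h2 : S2.Sublist (lB n))
    (h3 : S3.Sublist (lC n)) (h4 : S4.Sublist T) :
    (S0 ++ S1 ++ S2 ++ S3 ++ S4).Sublist (reachSeq n ++ T) := by
  have h := (((h0.append h1).append h2).append h3).append h4
  simpa [reachSeq, lA, lB, lC] using h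

lemma memA (n x : ℕ) (h1 : x % 2 = 1) (h3 : 3 ≤ x) (hn : x ≤ n) :
    [((1:ℕ), x)].Sublist (lA n) := by
  refine List.singleton_sublist.mpr ?_
  simp only [lA, List.mem_map, List.mem_filter, List.mem_range]
  exact ⟨x, ⟨by omega, by simp [h1, h3]⟩, rfl⟩

lemma memB (n y : ℕ) (h1 : y % 2 = 0) (h3 : 4 ≤ y) (hn : y ≤ n) :
    [((2:ℕ), y)].Sublist (lB n) := by
  refine List.singleton_sublist.mpr ?_
  simp only [lB, List.mem_map, List.mem_filter, List.mem_range]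
  exact ⟨y, ⟨by omega, by simp [h1, h3]⟩, rfl⟩

lemma memC (n x : ℕ) (h1 : x % 2 = 1) (h3 : 3 ≤ x) (hn : x < n) :
    [(x, x + 1)].Sublist (lC n) := by
  refine List.singleton_sublist.mpr ?_
  simp only [lC, List.mem_map, List.mem_filter, List.mem_range]
  exact ⟨x, ⟨by omega, by simp [h1, h3]⟩, rfl⟩

set_option maxHeartbeats 2000000 in
lemma core (n a b : ℕ) (T : List (ℕ × ℕ)) (hn : 2 ≤ n)
    (ha1 : 1 ≤ a) (han : a ≤ n) (hb1 : 1 ≤ b) (hbn : b ≤ n) (hab : a ≠ b)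
    (hT : n % 2 = 1 → [((1:ℕ),(2:ℕ))].Sublist T) :
    ∃ S : List (ℕ × ℕ), S.Sublist (reachSeq n ++ T) ∧ netPerm S 1 = a ∧ netPerm S 2 = b := by
  by_cases ha3 : a < 3
  · by_cases ha1' : a = 1
    · subst ha1'
      -- a = 1
      by_cases hb3 : b < 3
      · -- b = 2
        have hb2 : b = 2 := by omega
        subst hb2
        exact ⟨[], List.nil_sublist _, by simp [netPerm_nil], by simp [netPerm_nil]⟩
      · rcases Nat.mod_two_eq_zero_or_one b with hbe | hbo
        · -- b even ≥ 4
          refine ⟨[(2,b)], build n T [] [] [(2,b)] [] [] (List.nil_sublist _)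
            (List.nil_sublist _) (memB n b hbe (by omega) hbn) (List.nil_sublist _)
            (List.nil_sublist _), ?_, ?_⟩ <;>
          · simp only [netPerm_cons, netPerm_nil, Equiv.Perm.mul_apply, Equiv.Perm.one_apply,
              Equiv.swap_apply_def]
            split_ifs <;> omega
        · by_cases hblt : b < n
          · -- b odd, b < n
            refine ⟨[(2,b+1),(b,b+1)], build n T [] [] [(2,b+1)] [(b,b+1)] []
              (List.nil_sublist _) (List.nil_sublist _)
              (memB n (b+1) (by omega) (by omega) (by omega))
              (memC n b hbo (by omega) hblt) (List.nil_sublist _), ?_, ?_⟩ <;>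
            · simp only [netPerm_cons, netPerm_nil, Equiv.Perm.mul_apply, Equiv.Perm.one_apply,
                Equiv.swap_apply_def]
              split_ifs <;> omega
          · -- b = n odd
            have hbn' : b = n := by omega
            refine ⟨[(1,2),(1,b),(1,2)], build n T [(1,2)] [(1,b)] [] [] [(1,2)]
              (List.Sublist.refl _) (memA n b hbo (by omega) (by omega)) (List.nil_sublist _)
              (List.nil_sublist _) (hT (by omega)), ?_, ?_⟩ <;>
            · simp only [netPerm_cons, netPerm_nil, Equiv.Perm.mul_apply, Equiv.Perm.one_apply,
                Equiv.swap_apply_def]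
              split_ifs <;> omega
    · -- a = 2
      have ha2 : a = 2 := by omega
      subst ha2
      by_cases hb3 : b < 3
      · -- b = 1
        have hb2 : b = 1 := by omega
        subst hb2
        refine ⟨[(1,2)], build n T [(1,2)] [] [] [] [] (List.Sublist.refl _)
          (List.nil_sublist _) (List.nil_sublist _) (List.nil_sublist _)
          (List.nil_sublist _), ?_, ?_⟩ <;>
        · simp only [netPerm_cons, netPerm_nil, Equiv.Perm.mul_apply, Equiv.Perm.one_apply,
            Equiv.swap_apply_def]
          split_ifs <;> omega
      · rcases Nat.mod_two_eq_zero_or_one b with hbe | hbo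
        · -- b even ≥ 4
          have hc := memC n (b-1) (by omega) (by omega) (by omega)
          rw [show b - 1 + 1 = b by omega] at hc
          refine ⟨[(1,2),(1,b-1),(b-1,b)], build n T [(1,2)] [(1,b-1)] [] [(b-1,b)] []
            (List.Sublist.refl _) (memA n (b-1) (by omega) (by omega) (by omega))
            (List.nil_sublist _) hc (List.nil_sublist _), ?_, ?_⟩ <;>
          · simp only [netPerm_cons, netPerm_nil, Equiv.Perm.mul_apply, Equiv.Perm.one_apply,
              Equiv.swap_apply_def]
            split_ifs <;> omega
        · -- b odd ≥ 3
          refine ⟨[(1,2),(1,b)], build n T [(1,2)] [(1,b)] [] [] [] (List.Sublist.refl _)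
            (memA n b hbo (by omega) hbn) (List.nil_sublist _) (List.nil_sublist _)
            (List.nil_sublist _), ?_, ?_⟩ <;>
          · simp only [netPerm_cons, netPerm_nil, Equiv.Perm.mul_apply, Equiv.Perm.one_apply,
              Equiv.swap_apply_def]
            split_ifs <;> omega
  · -- a ≥ 3
    rcases Nat.mod_two_eq_zero_or_one a with hae | hao
    · -- a even ≥ 4
      by_cases hb3 : b < 3
      · by_cases hb1' : b = 1
        · subst hb1'
          refine ⟨[(1,2),(2,a)], build n T [(1,2)] [] [(2,a)] [] [] (List.Sublist.refl _)
            (List.nil_sublist _) (memB n a hae (by omega) han) (List.nil_sublist _)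
            (List.nil_sublist _), ?_, ?_⟩ <;>
          · simp only [netPerm_cons, netPerm_nil, Equiv.Perm.mul_apply, Equiv.Perm.one_apply,
              Equiv.swap_apply_def]
            split_ifs <;> omega
        · -- b = 2
          have hb2 : b = 2 := by omega
          subst hb2
          have hc := memC n (a-1) (by omega) (by omega) (by omega)
          rw [show a - 1 + 1 = a by omega] at hc
          refine ⟨[(1,a-1),(a-1,a)], build n T [] [(1,a-1)] [] [(a-1,a)] []
            (List.nil_sublist _) (memA n (a-1) (by omega) (by omega) (by omega))
            (List.nil_sublist _) hc (List.nil_sublist _), ?_, ?_⟩ <;>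
          · simp only [netPerm_cons, netPerm_nil, Equiv.Perm.mul_apply, Equiv.Perm.one_apply,
              Equiv.swap_apply_def]
            split_ifs <;> omega
      · rcases Nat.mod_two_eq_zero_or_one b with hbe | hbo
        · -- b even ≥ 4
          have hc := memC n (b-1) (by omega) (by omega) (by omega)
          rw [show b - 1 + 1 = b by omega] at hc
          refine ⟨[(1,2),(1,b-1),(2,a),(b-1,b)], build n T [(1,2)] [(1,b-1)] [(2,a)] [(b-1,b)] []
            (List.Sublist.refl _) (memA n (b-1) (by omega) (by omega) (by omega))
            (memB n a hae (by omega) han) hc (List.nil_sublist _), ?_, ?_⟩ <;>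
          · simp only [netPerm_cons, netPerm_nil, Equiv.Perm.mul_apply, Equiv.Perm.one_apply,
              Equiv.swap_apply_def]
            split_ifs <;> omega
        · -- b odd ≥ 3
          refine ⟨[(1,2),(1,b),(2,a)], build n T [(1,2)] [(1,b)] [(2,a)] [] []
            (List.Sublist.refl _) (memA n b hbo (by omega) hbn)
            (memB n a hae (by omega) han) (List.nil_sublist _) (List.nil_sublist _), ?_, ?_⟩ <;>
          · simp only [netPerm_cons, netPerm_nil, Equiv.Perm.mul_apply, Equiv.Perm.one_apply,
              Equiv.swap_apply_def]
            split_ifs <;> omega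
    · -- a odd ≥ 3
      by_cases hb3 : b < 3
      · by_cases hb1' : b = 1
        · subst hb1'
          by_cases halt : a < n
          · refine ⟨[(1,2),(2,a+1),(a,a+1)], build n T [(1,2)] [] [(2,a+1)] [(a,a+1)] []
              (List.Sublist.refl _) (List.nil_sublist _)
              (memB n (a+1) (by omega) (by omega) (by omega))
              (memC n a hao (by omega) halt) (List.nil_sublist _), ?_, ?_⟩ <;>
            · simp only [netPerm_cons, netPerm_nil, Equiv.Perm.mul_apply, Equiv.Perm.one_apply,
                Equiv.swap_apply_def]
              split_ifs <;> omega
          · -- a = n odd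
            have han' : a = n := by omega
            refine ⟨[(1,a),(1,2)], build n T [] [(1,a)] [] [] [(1,2)]
              (List.nil_sublist _) (memA n a hao (by omega) (by omega)) (List.nil_sublist _)
              (List.nil_sublist _) (hT (by omega)), ?_, ?_⟩ <;>
            · simp only [netPerm_cons, netPerm_nil, Equiv.Perm.mul_apply, Equiv.Perm.one_apply,
                Equiv.swap_apply_def]
              split_ifs <;> omega
        · -- b = 2
          have hb2 : b = 2 := by omega
          subst hb2
          refine ⟨[(1,a)], build n T [] [(1,a)] [] [] [] (List.nil_sublist _)
            (memA n a hao (by omega) han) (List.nil_sublist _) (List.nil_sublist _)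
            (List.nil_sublist _), ?_, ?_⟩ <;>
          · simp only [netPerm_cons, netPerm_nil, Equiv.Perm.mul_apply, Equiv.Perm.one_apply,
              Equiv.swap_apply_def]
            split_ifs <;> omega
      · rcases Nat.mod_two_eq_zero_or_one b with hbe | hbo
        · -- b even ≥ 4
          refine ⟨[(1,a),(2,b)], build n T [] [(1,a)] [(2,b)] [] [] (List.nil_sublist _)
            (memA n a hao (by omega) han) (memB n b hbe (by omega) hbn)
            (List.nil_sublist _) (List.nil_sublist _), ?_, ?_⟩ <;>
          · simp only [netPerm_cons, netPerm_nil, Equiv.Perm.mul_apply, Equiv.Perm.one_apply,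
              Equiv.swap_apply_def]
            split_ifs <;> omega
        · -- b odd ≥ 3
          by_cases hblt : b < n
          · refine ⟨[(1,a),(2,b+1),(b,b+1)], build n T [] [(1,a)] [(2,b+1)] [(b,b+1)] []
              (List.nil_sublist _) (memA n a hao (by omega) han)
              (memB n (b+1) (by omega) (by omega) (by omega))
              (memC n b hbo (by omega) hblt) (List.nil_sublist _), ?_, ?_⟩ <;>
            · simp only [netPerm_cons, netPerm_nil, Equiv.Perm.mul_apply, Equiv.Perm.one_apply,
                Equiv.swap_apply_def]
              split_ifs <;> omega
          · -- b = n odd, a odd < n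
            have hbn' : b = n := by omega
            refine ⟨[(1,2),(1,b),(2,a+1),(a,a+1)], build n T [(1,2)] [(1,b)] [(2,a+1)] [(a,a+1)] []
              (List.Sublist.refl _) (memA n b hbo (by omega) (by omega))
              (memB n (a+1) (by omega) (by omega) (by omega))
              (memC n a hao (by omega) (by omega)) (List.nil_sublist _), ?_, ?_⟩ <;>
            · simp only [netPerm_cons, netPerm_nil, Equiv.Perm.mul_apply, Equiv.Perm.one_apply,
                Equiv.swap_apply_def]
              split_ifs <;> omega

lemma reach_bounds (n : ℕ) (hn : 2 ≤ n) :
    ∀ p ∈ reachSeq n, p.1 ∈ Finset.Icc 1 n ∧ p.2 ∈ Finset.Icc 1 n ∧ p.1 ≠ p.2 := by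
  intro p hp
  simp only [reachSeq, List.mem_cons, List.mem_append, List.mem_map] at hp
  rcases hp with rfl | (⟨x, hx, rfl⟩ | ⟨y, hy, rfl⟩) | ⟨x, hx, rfl⟩
  all_goals simp_all only [List.mem_filter, List.mem_range, decide_eq_true_eq,
    Finset.mem_Icc, ne_eq, and_true, true_and]
  all_goals omega

/-- **The explicit construction for 2-reachability.** For every even `n ≥ 2` the
sequence `reachSeq n` is a 2-reachability network on `n` elements; for every odd
`n ≥ 3`, appending the transposition `(1,2)` at the end yields a 2-reachability
network on `n` elements. -/
theorem reachSeq_is_two_reachability :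
    (∀ n : ℕ, 2 ≤ n → Even n → IsReachNet n 2 (reachSeq n)) ∧
    (∀ n : ℕ, 3 ≤ n → Odd n → IsReachNet n 2 (reachSeq n ++ [((1 : ℕ), (2 : ℕ))])) := by
  constructor
  · intro n hn hev
    have hne : n % 2 = 0 := Nat.even_iff.mp hev
    refine ⟨reach_bounds n hn, ?_⟩
    intro x hx hinj
    have hab : x 0 ≠ x 1 := fun h => absurd (hinj h) (by decide)
    have h0 := hx 0; have h1 := hx 1
    rw [Finset.mem_Icc] at h0 h1
    obtain ⟨S, hS, e1, e2⟩ := core n (x 0) (x 1) [] hn h0.1 h0.2 h1.1 h1.2 hab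
      (fun h => absurd h (by omega))
    refine ⟨S, by simpa using hS, ?_⟩
    intro j
    fin_cases j
    · exact e1
    · exact e2
  · intro n hn hodd
    have hno : n % 2 = 1 := Nat.odd_iff.mp hodd
    constructor
    · intro p hp
      rw [List.mem_append] at hp
      rcases hp with hp | hp
      · exact reach_bounds n (by omega) p hp
      · simp only [List.mem_singleton] at hp
        subst hp
        simp only [Finset.mem_Icc, ne_eq]
        refine ⟨⟨by omega, by omega⟩, ⟨by omega, by omega⟩, by omega⟩
    · intro x hx hinj
      have hab : x 0 ≠ x 1 := fun h => absurd (hinj h) (by decide)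
      have h0 := hx 0; have h1 := hx 1
      rw [Finset.mem_Icc] at h0 h1
      obtain ⟨S, hS, e1, e2⟩ := core n (x 0) (x 1) [((1:ℕ),(2:ℕ))] (by omega)
        h0.1 h0.2 h1.1 h1.2 hab (fun _ => List.Sublist.refl _)
      refine ⟨S, hS, ?_⟩
      intro j
      fin_cases j
      · exact e1
      · exact e2
end

section
/- For every n ≥ 3, every 2-reachability network on n elements in which every transposition is a star transposition has length at least ⌈3(n−1)/2⌉. -/
/-!
Write the network as the list `A` of partners `c` of its transpositions `(1, c)`. Every value
`2, …, n` occurs in `A`, so `|A| ≥ (n - 1) + #R`, where `R` is the set of positions repeating an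
earlier entry. A value occurring at least twice owns a repeat, so it suffices to show that the
values occurring only once ("singles") number at most `#R`; then `n - 1 ≤ 2 #R`.

Following the points `1` and `2` through subsequences realising the targets `(1, s)`, `(s', s)`,
`(2, s)` and `(s, 1)` shows: after every single `s ≥ 3` there is a repeat, between any two such
singles there is a repeat, and if `2` is a single there is a repeat before all of them. Sending
each single `s ≥ 3` to the first repeat after it is then injective, and the extra repeat pays for
the single `2`.
-/

namespace StarNetwork

open Finset Equiv

def starPerm (B : List ℕ) : Perm ℕ := (B.map (swap 1)).reverse.prod

theorem netPerm_eq_starPerm {S : List (ℕ × ℕ)} (hS : ∀ p ∈ S, p.1 = 1) :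
    netPerm S = starPerm (S.map Prod.snd) := by
  rw [netPerm, starPerm, List.map_map]
  congr 2
  exact List.map_congr_left fun p hp => by rw [Function.comp_apply, hS p hp]

theorem starPerm_cons_apply (c : ℕ) (B : List ℕ) (x : ℕ) :
    starPerm (c :: B) x = starPerm B (swap 1 c x) := by
  simp [starPerm, List.prod_append, Perm.mul_apply]

theorem starPerm_append_apply (P Q : List ℕ) (x : ℕ) :
    starPerm (P ++ Q) x = starPerm Q (starPerm P x) := by
  simp [starPerm, List.prod_append, Perm.mul_apply]

theorem starPerm_apply_of_not_mem {B : List ℕ} {x : ℕ} (hx : x ≠ 1) (hB : x ∉ B) :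
    starPerm B x = x := by
  induction B with
  | nil => rfl
  | cons c B ih =>
    rw [List.mem_cons, not_or] at hB
    rw [starPerm_cons_apply, swap_apply_of_ne_of_ne hx hB.1, ih hB.2]

theorem starPerm_apply_eq_iff_of_not_mem {B : List ℕ} {x y : ℕ} (hx : x ≠ 1) (hB : x ∉ B) :
    starPerm B y = x ↔ y = x :=
  (starPerm B).injective.eq_iff' (starPerm_apply_of_not_mem hx hB)

theorem mem_of_starPerm_apply_eq {B : List ℕ} {x y : ℕ} (h : starPerm B x = y) (hy : y ≠ 1)
    (hxy : x ≠ y) : y ∈ B := by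
  by_contra hB
  exact hxy ((starPerm_apply_eq_iff_of_not_mem hy hB).1 h)

theorem mem_of_starPerm_apply_eq_one {B : List ℕ} {x : ℕ} (h : starPerm B x = 1)
    (hx : x ≠ 1) : x ∈ B := by
  by_contra hB
  exact hx (starPerm_apply_of_not_mem hx hB ▸ h)

/-- The last occurrence of `s` is the moment at which a point reaching `s` leaves `1`. -/
theorem starPerm_apply_eq_one_of_append_cons {P Q : List ℕ} {s x : ℕ} (hs : s ≠ 1)
    (hQ : s ∉ Q) (h : starPerm (P ++ s :: Q) x = s) : starPerm P x = 1 := by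
  rwa [starPerm_append_apply, starPerm_cons_apply, starPerm_apply_eq_iff_of_not_mem hs hQ,
    swap_apply_eq_iff, swap_apply_right] at h

theorem exists_eq_append_cons_of_count_le_one {B : List ℕ} {s : ℕ} (hs : s ∈ B)
    (hc : B.count s ≤ 1) : ∃ P Q, B = P ++ s :: Q ∧ s ∉ P ∧ s ∉ Q := by
  obtain ⟨P, Q, rfl⟩ := List.append_of_mem hs
  rw [List.count_append, List.count_cons_self] at hc
  exact ⟨P, Q, rfl, fun h => by have := List.count_pos_iff.2 h; omega,
    fun h => by have := List.count_pos_iff.2 h; omega⟩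

section Patterns

variable {B : List ℕ} {s : ℕ}

theorem exists_sublist_of_starPerm_one_eq_one (hs1 : s ≠ 1) (hs2 : s ≠ 2) (hc : B.count s ≤ 1)
    (h1 : starPerm B 1 = 1) (h2 : starPerm B 2 = s) : ∃ w, [w, s, w].Sublist B := by
  obtain ⟨P, Q, rfl, hsP, hsQ⟩ :=
    exists_eq_append_cons_of_count_le_one (mem_of_starPerm_apply_eq h2 hs1 hs2.symm) hc
  have hP2 : starPerm P 2 = 1 := starPerm_apply_eq_one_of_append_cons hs1 hsQ h2
  set w := starPerm P 1 with hw
  have hw1 : w ≠ 1 := fun h => absurd ((starPerm P).injective (h.trans hP2.symm)) (by decide)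
  have hwP : w ∈ P := mem_of_starPerm_apply_eq hw.symm hw1 (Ne.symm hw1)
  have hwQ : w ∈ Q := by
    rw [starPerm_append_apply, ← hw, starPerm_cons_apply,
      swap_apply_of_ne_of_ne hw1 (ne_of_mem_of_not_mem hwP hsP)] at h1
    exact mem_of_starPerm_apply_eq_one h1 hw1
  exact ⟨w, (List.singleton_sublist.2 hwP).append ((List.singleton_sublist.2 hwQ).cons_cons s)⟩

theorem exists_sublist_or_sublist_of_starPerm_one_eq {s' : ℕ} (hs1 : s ≠ 1) (hs2 : s ≠ 2)
    (hs'1 : s' ≠ 1) (hs'2 : s' ≠ 2) (hc : B.count s ≤ 1) (hc' : B.count s' ≤ 1)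
    (h1 : starPerm B 1 = s') (h2 : starPerm B 2 = s) :
    (∃ w, [w, s, w, s'].Sublist B) ∨ [s', s].Sublist B := by
  obtain ⟨P, Q, rfl, hs'P, hs'Q⟩ :=
    exists_eq_append_cons_of_count_le_one (mem_of_starPerm_apply_eq h1 hs'1 hs'1.symm) hc'
  by_cases hsQ : s ∈ Q
  · exact .inr
      (((List.singleton_sublist.2 hsQ).cons_cons s').trans (List.sublist_append_right P _))
  left
  have hP1 : starPerm P 1 = 1 := starPerm_apply_eq_one_of_append_cons hs'1 hs'Q h1
  have hP2 : starPerm P 2 = s := by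
    have hne1 : starPerm P 2 ≠ 1 := fun h => absurd ((starPerm P).injective (h.trans hP1.symm))
      (by decide)
    have hne' : starPerm P 2 ≠ s' := fun h =>
      hs'2 ((starPerm_apply_eq_iff_of_not_mem hs'1 hs'P).1 h).symm
    rwa [starPerm_append_apply, starPerm_cons_apply, swap_apply_of_ne_of_ne hne1 hne',
      starPerm_apply_eq_iff_of_not_mem hs1 hsQ] at h2
  obtain ⟨w, hw⟩ := exists_sublist_of_starPerm_one_eq_one hs1 hs2
    (le_trans (by simp [List.count_append]) hc) hP1 hP2
  exact ⟨w, hw.append ((List.nil_sublist Q).cons_cons s')⟩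

theorem two_cons_sublist_of_starPerm_one_eq_two {u : ℕ} (hu : u ≠ 1) (hc : B.count 2 ≤ 1)
    (h1 : starPerm B 1 = 2) (h2 : starPerm B 2 = u) : [2, u].Sublist B := by
  obtain ⟨P, Q, rfl, h2P, -⟩ :=
    exists_eq_append_cons_of_count_le_one (mem_of_starPerm_apply_eq h1 (by decide) (by decide)) hc
  rw [starPerm_append_apply, starPerm_apply_of_not_mem (by decide) h2P, starPerm_cons_apply,
    swap_apply_right] at h2
  exact ((List.singleton_sublist.2 (mem_of_starPerm_apply_eq h2 hu hu.symm)).cons_cons 2).trans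
    (List.sublist_append_right P _)

theorem exists_sublist_or_sublist_of_starPerm_two_eq_one (hB : ∀ c ∈ B, c ≠ 1) (hs1 : s ≠ 1)
    (hs2 : s ≠ 2) (hc : B.count s ≤ 1) (h1 : starPerm B 1 = s) (h2 : starPerm B 2 = 1) :
    (∃ w, [w, w, s].Sublist B) ∨ [s, 2].Sublist B := by
  have h2B : 2 ∈ B := mem_of_starPerm_apply_eq_one h2 (by decide)
  obtain ⟨P, Q, rfl, -, hsQ⟩ :=
    exists_eq_append_cons_of_count_le_one (mem_of_starPerm_apply_eq h1 hs1 hs1.symm) hc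
  have hP1 : starPerm P 1 = 1 := starPerm_apply_eq_one_of_append_cons hs1 hsQ h1
  cases P with
  | nil =>
    have h2Q : 2 ∈ Q := (List.mem_cons.1 h2B).resolve_left (Ne.symm hs2)
    exact .inr ((List.singleton_sublist.2 h2Q).cons_cons s)
  | cons c P =>
    have hc1 : c ≠ 1 := hB c (by simp)
    rw [starPerm_cons_apply, swap_apply_left] at hP1
    have hcP : c ∈ P := mem_of_starPerm_apply_eq_one hP1 hc1
    exact .inl ⟨c, ((List.singleton_sublist.2 hcP).cons_cons c).append
      ((List.nil_sublist Q).cons_cons s)⟩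

end Patterns

section Positions

variable {α : Type*} {A : List α}

theorem exists_orderEmbedding_of_sublist {l : List α} (h : l.Sublist A) :
    ∃ f : Fin l.length ↪o Fin A.length, ∀ i, A[f i] = l[i] := by
  obtain ⟨f, hf⟩ := List.sublist_iff_exists_fin_orderEmbedding_get_eq.1 h
  exact ⟨f, fun i => by simpa using (hf i).symm⟩

variable [DecidableEq α]

def repeatIdx (A : List α) : Finset (Fin A.length) := {j | ∃ i < j, A[i] = A[j]}

theorem mem_repeatIdx {j : Fin A.length} : j ∈ repeatIdx A ↔ ∃ i < j, A[i] = A[j] := by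
  simp [repeatIdx]

theorem eq_of_getElem_eq_of_count_le_one {v : α} (hc : A.count v ≤ 1) {i j : Fin A.length}
    (hi : A[i] = v) (hj : A[j] = v) : i = j := by
  by_contra hij
  have hdup : List.Duplicate v A := by
    rcases lt_or_gt_of_ne hij with h | h
    · exact List.duplicate_iff_exists_distinct_get.2 ⟨i, j, h, by simpa using hi.symm,
        by simpa using hj.symm⟩
    · exact List.duplicate_iff_exists_distinct_get.2 ⟨j, i, h, by simpa using hj.symm,
        by simpa using hi.symm⟩
  have := List.duplicate_iff_two_le_count.1 hdup
  omega

theorem exists_mem_repeatIdx_of_one_lt_count {v : α} (hv : 1 < A.count v) :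
    ∃ j ∈ repeatIdx A, A[j] = v := by
  obtain ⟨i, j, hij, hi, hj⟩ := List.duplicate_iff_exists_distinct_get.1
    (List.duplicate_iff_two_le_count.2 hv)
  simp only [List.get_eq_getElem] at hi hj
  exact ⟨j, mem_repeatIdx.2 ⟨i, hij, hi.symm.trans hj⟩, hj.symm⟩

theorem exists_not_mem_repeatIdx_of_mem {v : α} (hv : v ∈ A) :
    ∃ j ∉ repeatIdx A, A[j] = v := by
  obtain ⟨j, hj, hmin⟩ := ({j | A[j] = v} : Finset (Fin A.length)).exists_min_image id
    (by obtain ⟨j, hj⟩ := List.mem_iff_get.1 hv; exact ⟨j, by simpa using hj⟩)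
  rw [mem_filter] at hj
  refine ⟨j, fun hrep => ?_, hj.2⟩
  obtain ⟨i, hij, hi⟩ := mem_repeatIdx.1 hrep
  exact absurd (hmin i (by simpa [hj.2] using hi)) (not_le.2 hij)

theorem card_add_card_repeatIdx_le {V : Finset α} (hV : ∀ v ∈ V, v ∈ A) :
    V.card + (repeatIdx A).card ≤ A.length := by
  have hV : V.card ≤ (repeatIdx A)ᶜ.card :=
    card_le_card_of_surjOn (fun j => A[j]) fun v hv => by
      obtain ⟨j, hj, hjv⟩ := exists_not_mem_repeatIdx_of_mem (hV v hv)
      exact ⟨j, by simpa using hj, hjv⟩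
  rw [card_compl, Fintype.card_fin] at hV
  have := card_le_univ (repeatIdx A)
  rw [Fintype.card_fin] at this
  omega

theorem card_filter_one_lt_count_le (V : Finset α) :
    (V.filter (1 < A.count ·)).card ≤ (repeatIdx A).card :=
  card_le_card_of_surjOn (fun j => A[j]) fun v hv => by
    obtain ⟨j, hj, hjv⟩ := exists_mem_repeatIdx_of_one_lt_count (mem_filter.1 hv).2
    exact ⟨j, hj, hjv⟩

end Positions

theorem exists_strictMonoOn_of_exists_between {β : Type*} [LinearOrder β] {P X : Finset β}
    (hafter : ∀ p ∈ P, ∃ r ∈ X, p < r)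
    (hbetween : ∀ p ∈ P, ∀ p' ∈ P, p < p' → ∃ r ∈ X, p < r ∧ r < p') :
    ∃ g : β → β, StrictMonoOn g P ∧ ∀ p ∈ P, g p ∈ X ∧ p < g p := by
  have hnext : ∀ p ∈ P, ∃ r ∈ X, p < r ∧ ∀ r' ∈ X, p < r' → r ≤ r' := by
    intro p hp
    obtain ⟨r₀, hr₀, hpr₀⟩ := hafter p hp
    obtain ⟨r, hr, hmin⟩ :=
      (X.filter (p < ·)).exists_min_image id ⟨r₀, mem_filter.2 ⟨hr₀, hpr₀⟩⟩
    rw [mem_filter] at hr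
    exact ⟨r, hr.1, hr.2, fun r' hr' hpr' => hmin r' (mem_filter.2 ⟨hr', hpr'⟩)⟩
  choose! g hgX hgt hgmin using hnext
  refine ⟨g, fun p hp p' hp' hpp' => ?_, fun p hp => ⟨hgX p hp, hgt p hp⟩⟩
  obtain ⟨r, hr, hpr, hrp'⟩ := hbetween p hp p' hp' hpp'
  exact ((hgmin p hp r hr hpr).trans_lt hrp').trans (hgt p' hp')

def IsStarReach (n : ℕ) (A : List ℕ) : Prop :=
  ∀ x₁ ∈ Icc 1 n, ∀ x₂ ∈ Icc 1 n, x₁ ≠ x₂ →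
    ∃ B : List ℕ, B.Sublist A ∧ starPerm B 1 = x₁ ∧ starPerm B 2 = x₂

theorem isStarReach_of_isReachNet {n : ℕ} {L : List (ℕ × ℕ)} (hL : IsReachNet n 2 L)
    (hstar : ∀ p ∈ L, p.1 = 1) : IsStarReach n (L.map Prod.snd) := by
  intro x₁ hx₁ x₂ hx₂ hne
  obtain ⟨S, hSL, hS⟩ := hL.2 ![x₁, x₂] (fun j => by fin_cases j <;> assumption)
    (by simpa [Function.Injective, Fin.forall_fin_two] using ⟨hne, hne.symm⟩)
  rw [netPerm_eq_starPerm fun p hp => hstar p (hSL.subset hp)] at hS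
  exact ⟨S.map Prod.snd, hSL.map _, hS 0, hS 1⟩

section SinglePositions

variable {n : ℕ} {A : List ℕ}

theorem IsStarReach.mem (hA : IsStarReach n A) {v : ℕ} (hv : v ∈ Icc 2 n) : v ∈ A := by
  rw [mem_Icc] at hv
  obtain ⟨B, hBA, h1, -⟩ := hA v (by simp; omega) 1 (by simp; omega) (by omega)
  exact hBA.subset (mem_of_starPerm_apply_eq h1 (by omega) (by omega))

def singlePos (n : ℕ) (A : List ℕ) : Finset (Fin A.length) :=
  {p | A.count A[p] ≤ 1 ∧ A[p] ∈ Icc 3 n}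

theorem mem_singlePos {p : Fin A.length} :
    p ∈ singlePos n A ↔ A.count A[p] ≤ 1 ∧ 3 ≤ A[p] ∧ A[p] ≤ n := by
  simp only [singlePos, mem_filter, mem_univ, true_and, mem_Icc]

theorem exists_mem_repeatIdx_gt (hA : IsStarReach n A) {p : Fin A.length}
    (hp : p ∈ singlePos n A) : ∃ r ∈ repeatIdx A, p < r := by
  obtain ⟨hc, hs⟩ := mem_singlePos.1 hp
  obtain ⟨B, hBA, h1, h2⟩ :=
    hA 1 (mem_Icc.2 ⟨le_rfl, by omega⟩) A[p] (mem_Icc.2 ⟨by omega, hs.2⟩) (by omega)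
  obtain ⟨w, hw⟩ := exists_sublist_of_starPerm_one_eq_one (by omega) (by omega)
    ((hBA.count_le _).trans hc) h1 h2
  obtain ⟨f, hf⟩ := exists_orderEmbedding_of_sublist (hw.trans hBA)
  have hfp : f 1 = p := eq_of_getElem_eq_of_count_le_one hc (hf 1) rfl
  exact ⟨f 2, mem_repeatIdx.2 ⟨f 0, f.strictMono (show (0 : Fin 3) < 2 by decide),
    (hf 0).trans (hf 2).symm⟩, hfp ▸ f.strictMono (show (1 : Fin 3) < 2 by decide)⟩

theorem exists_mem_repeatIdx_between (hA : IsStarReach n A) {p p' : Fin A.length}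
    (hp : p ∈ singlePos n A) (hp' : p' ∈ singlePos n A) (hpp' : p < p') :
    ∃ r ∈ repeatIdx A, p < r ∧ r < p' := by
  obtain ⟨hc, hs⟩ := mem_singlePos.1 hp
  obtain ⟨hc', hs'⟩ := mem_singlePos.1 hp'
  have hne : A[p'] ≠ A[p] := fun h => hpp'.ne' (eq_of_getElem_eq_of_count_le_one hc h rfl)
  obtain ⟨B, hBA, h1, h2⟩ :=
    hA A[p'] (mem_Icc.2 ⟨by omega, hs'.2⟩) A[p] (mem_Icc.2 ⟨by omega, hs.2⟩) hne
  rcases exists_sublist_or_sublist_of_starPerm_one_eq (by omega) (by omega) (by omega) (by omega)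
    ((hBA.count_le _).trans hc) ((hBA.count_le _).trans hc') h1 h2 with ⟨w, hw⟩ | hw
  · obtain ⟨f, hf⟩ := exists_orderEmbedding_of_sublist (hw.trans hBA)
    have hf1 : f 1 = p := eq_of_getElem_eq_of_count_le_one hc (hf 1) rfl
    have hf3 : f 3 = p' := eq_of_getElem_eq_of_count_le_one hc' (hf 3) rfl
    refine ⟨f 2, mem_repeatIdx.2 ⟨f 0, f.strictMono (show (0 : Fin 4) < 2 by decide),
      (hf 0).trans (hf 2).symm⟩, ?_, ?_⟩
    · exact hf1 ▸ f.strictMono (show (1 : Fin 4) < 2 by decide)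
    · exact hf3 ▸ f.strictMono (show (2 : Fin 4) < 3 by decide)
  · obtain ⟨f, hf⟩ := exists_orderEmbedding_of_sublist (hw.trans hBA)
    have hf0 : f 0 = p' := eq_of_getElem_eq_of_count_le_one hc' (hf 0) rfl
    have hf1 : f 1 = p := eq_of_getElem_eq_of_count_le_one hc (hf 1) rfl
    exact absurd (hf0 ▸ hf1 ▸ f.strictMono (show (0 : Fin 2) < 1 by decide)) hpp'.not_gt

theorem lt_of_getElem_eq_two (hA : IsStarReach n A) (h2 : A.count 2 ≤ 1) {q p : Fin A.length}
    (hq : A[q] = 2) (hp : p ∈ singlePos n A) : q < p := by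
  obtain ⟨hc, hs⟩ := mem_singlePos.1 hp
  obtain ⟨B, hBA, h1, h2'⟩ :=
    hA 2 (mem_Icc.2 ⟨by omega, by omega⟩) A[p] (mem_Icc.2 ⟨by omega, hs.2⟩) (by omega)
  have hsub := two_cons_sublist_of_starPerm_one_eq_two (by omega) ((hBA.count_le 2).trans h2) h1 h2'
  obtain ⟨f, hf⟩ := exists_orderEmbedding_of_sublist (hsub.trans hBA)
  rw [← eq_of_getElem_eq_of_count_le_one h2 (hf 0) hq,
    ← eq_of_getElem_eq_of_count_le_one hc (hf 1) rfl]
  exact f.strictMono (show (0 : Fin 2) < 1 by decide)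

theorem exists_mem_repeatIdx_lt (hA1 : ∀ c ∈ A, c ≠ 1) (hA : IsStarReach n A)
    (h2 : A.count 2 ≤ 1) {p : Fin A.length} (hp : p ∈ singlePos n A) :
    ∃ r ∈ repeatIdx A, r < p := by
  obtain ⟨hc, hs⟩ := mem_singlePos.1 hp
  obtain ⟨B, hBA, h1, h2'⟩ :=
    hA A[p] (mem_Icc.2 ⟨by omega, hs.2⟩) 1 (mem_Icc.2 ⟨le_rfl, by omega⟩) (by omega)
  rcases exists_sublist_or_sublist_of_starPerm_two_eq_one (fun c hc => hA1 c (hBA.subset hc))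
    (by omega) (by omega) ((hBA.count_le _).trans hc) h1 h2' with ⟨w, hw⟩ | hw
  · obtain ⟨f, hf⟩ := exists_orderEmbedding_of_sublist (hw.trans hBA)
    refine ⟨f 1, mem_repeatIdx.2 ⟨f 0, f.strictMono (show (0 : Fin 3) < 1 by decide),
      (hf 0).trans (hf 1).symm⟩, ?_⟩
    rw [← eq_of_getElem_eq_of_count_le_one hc (hf 2) rfl]
    exact f.strictMono (show (1 : Fin 3) < 2 by decide)
  · obtain ⟨f, hf⟩ := exists_orderEmbedding_of_sublist (hw.trans hBA)
    have hq := lt_of_getElem_eq_two hA h2 (hf 1) hp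
    rw [← eq_of_getElem_eq_of_count_le_one hc (hf 0) rfl] at hq
    exact absurd (f.strictMono (show (0 : Fin 2) < 1 by decide)) hq.not_gt

theorem exists_strictMonoOn_singlePos (hA : IsStarReach n A) :
    ∃ g : Fin A.length → Fin A.length, StrictMonoOn g (singlePos n A) ∧
      ∀ p ∈ singlePos n A, g p ∈ repeatIdx A ∧ p < g p :=
  exists_strictMonoOn_of_exists_between (fun _ hp => exists_mem_repeatIdx_gt hA hp)
    fun _ hp _ hp' => exists_mem_repeatIdx_between hA hp hp'

theorem card_singlePos_le (hA : IsStarReach n A) : (singlePos n A).card ≤ (repeatIdx A).card := by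
  obtain ⟨g, hg, hgX⟩ := exists_strictMonoOn_singlePos hA
  exact card_le_card_of_injOn g (fun p hp => (hgX p hp).1) hg.injOn

theorem card_singlePos_lt (hA1 : ∀ c ∈ A, c ≠ 1) (hA : IsStarReach n A) (h2 : A.count 2 ≤ 1)
    (hP : (singlePos n A).Nonempty) : (singlePos n A).card < (repeatIdx A).card := by
  obtain ⟨g, hg, hgX⟩ := exists_strictMonoOn_singlePos hA
  obtain ⟨r, hr, hrp⟩ := exists_mem_repeatIdx_lt hA1 hA h2 (min'_mem _ hP)
  have hgr : ∀ p ∈ singlePos n A, g p ≠ r := fun p hp h =>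
    (min'_le _ p hp).not_gt (((hgX p hp).2.trans_eq h).trans hrp)
  calc (singlePos n A).card
      ≤ ((repeatIdx A).erase r).card :=
        card_le_card_of_injOn g (fun p hp => mem_erase.2 ⟨hgr p hp, (hgX p hp).1⟩) hg.injOn
    _ < (repeatIdx A).card := card_erase_lt_of_mem hr

theorem card_singles_le_card_singlePos (hA : IsStarReach n A) :
    ((Icc 3 n).filter (A.count · ≤ 1)).card ≤ (singlePos n A).card :=
  card_le_card_of_surjOn (fun p => A[p]) fun v hv => by
    rw [mem_coe, mem_filter, mem_Icc] at hv
    obtain ⟨p, hp⟩ : ∃ p : Fin A.length, A[p] = v :=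
      List.mem_iff_get.1 (hA.mem (mem_Icc.2 ⟨by omega, hv.1.2⟩))
    exact ⟨p, mem_singlePos.2 (by rw [hp]; exact ⟨hv.2, hv.1⟩), hp⟩

theorem repeatIdx_nonempty (hA : IsStarReach n A) (hn : 3 ≤ n) (hP : singlePos n A = ∅) :
    (repeatIdx A).Nonempty := by
  obtain ⟨p, hp⟩ : ∃ p : Fin A.length, A[p] = 3 :=
    List.mem_iff_get.1 (hA.mem (mem_Icc.2 ⟨by omega, hn⟩))
  have h3 : 1 < A.count 3 := by
    by_contra h3
    have : p ∈ singlePos n A := mem_singlePos.2 (by rw [hp]; exact ⟨by omega, le_rfl, hn⟩)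
    simp [hP] at this
  obtain ⟨r, hr, -⟩ := exists_mem_repeatIdx_of_one_lt_count h3
  exact ⟨r, hr⟩

theorem card_singles_le (hA1 : ∀ c ∈ A, c ≠ 1) (hA : IsStarReach n A) (hn : 3 ≤ n) :
    ((Icc 2 n).filter (A.count · ≤ 1)).card ≤ (repeatIdx A).card := by
  have hS := card_singles_le_card_singlePos hA
  by_cases h2 : A.count 2 ≤ 1
  · have hsub : (Icc 2 n).filter (A.count · ≤ 1) ⊆
        insert 2 ((Icc 3 n).filter (A.count · ≤ 1)) := by
      intro v
      simp only [mem_filter, mem_Icc, mem_insert]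
      omega
    have hins := (card_le_card hsub).trans (card_insert_le _ _)
    rcases (singlePos n A).eq_empty_or_nonempty with hP | hP
    · have := (repeatIdx_nonempty hA hn hP).card_pos
      rw [hP, card_empty] at hS
      omega
    · have := card_singlePos_lt hA1 hA h2 hP
      omega
  · have hsub : (Icc 2 n).filter (A.count · ≤ 1) ⊆ (Icc 3 n).filter (A.count · ≤ 1) := by
      intro v
      simp only [mem_filter, mem_Icc]
      intro hv
      have : v ≠ 2 := fun h => h2 (h ▸ hv.2)
      omega
    exact (card_le_card hsub).trans (hS.trans (card_singlePos_le hA))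

end SinglePositions

end StarNetwork

open Finset StarNetwork

/-- **Lower bound for 2-reachability with star transpositions.** For every `n ≥ 3`,
every 2-reachability network on `n` elements in which every transposition is a star
transposition `(1, ·)` has length at least `⌈3(n-1)/2⌉`. -/
theorem two_reachability_star_lower_bound (n : ℕ) (hn : 3 ≤ n)
    (L : List (ℕ × ℕ)) (hL : IsReachNet n 2 L) (hstar : ∀ p ∈ L, p.1 = 1) :
    (3 * (n - 1) + 1) / 2 ≤ L.length := by
  set A := L.map Prod.snd
  have hA1 : ∀ c ∈ A, c ≠ 1 := by
    simp only [A, List.mem_map]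
    rintro _ ⟨p, hp, rfl⟩ h
    exact (hL.1 p hp).2.2 ((hstar p hp).trans h.symm)
  have hA := isStarReach_of_isReachNet hL hstar
  have hcover := card_add_card_repeatIdx_le fun v hv => hA.mem hv
  have hmulti := card_filter_one_lt_count_le (A := A) (Icc 2 n)
  have hsingle := card_singles_le hA1 hA hn
  have hsplit := card_filter_add_card_filter_not (s := Icc 2 n) (A.count · ≤ 1)
  simp only [not_le, Nat.card_Icc, A, List.length_map] at hcover hmulti hsingle hsplit ⊢
  omega
end

section
/- For every odd n = 2m+1 with m ≥ 1, the sequence of star transpositions consisting of (1,2), followed by (1,4), (1,6), …, (1,2m), followed by (1,3), (1,2), (1,5), (1,4), (1,7), (1,6), …, (1,2m+1), (1,2m), is a 2-reachability network on n elements. -/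
/-- For `n = 2m + 1`, the sequence of star transpositions `(1,2)`, then
`(1,4), (1,6), …, (1,2m)`, then `(1,3), (1,2), (1,5), (1,4), …, (1,2m+1), (1,2m)`. -/
def starSeqOdd (m : ℕ) : List (ℕ × ℕ) :=
  ((1 : ℕ), (2 : ℕ)) ::
    ((List.range (m - 1)).map (fun i => ((1 : ℕ), 2 * i + 4)) ++
     (List.range m).flatMap (fun i => [((1 : ℕ), 2 * i + 3), ((1 : ℕ), 2 * i + 2)]))

/-! ### Auxiliary machinery -/

/-- Evaluation of the network permutation, applied left to right. -/
def evL : List (ℕ × ℕ) → ℕ → ℕ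
  | [], x => x
  | ((a, b) :: S), x => evL S (if x = a then b else if x = b then a else x)

lemma netPerm_evL (S : List (ℕ × ℕ)) (x : ℕ) : netPerm S x = evL S x := by
  induction S generalizing x with
  | nil => simp [netPerm, evL]
  | cons p S ih =>
    obtain ⟨a, b⟩ := p
    rw [netPerm_cons]
    simp only [Equiv.Perm.mul_apply, evL]
    rw [ih, Equiv.swap_apply_def]


lemma evA (c : ℕ) (S : List (ℕ × ℕ)) : evL ((1, c) :: S) 1 = evL S c := by
  simp [evL]

lemma evB (c : ℕ) (S : List (ℕ × ℕ)) (h : c ≠ 1) : evL ((1, c) :: S) c = evL S 1 := by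
  simp [evL, h]

lemma evC (c x : ℕ) (S : List (ℕ × ℕ)) (h1 : x ≠ 1) (h2 : x ≠ c) :
    evL ((1, c) :: S) x = evL S x := by
  simp [evL, h1, h2]

/-- The "pair blocks" of the star sequence. -/
def pairF (i : ℕ) : List (ℕ × ℕ) := [((1 : ℕ), 2 * i + 3), ((1 : ℕ), 2 * i + 2)]

def prepL (m : ℕ) : List (ℕ × ℕ) := (List.range (m - 1)).map (fun i => ((1 : ℕ), 2 * i + 4))

def pairsL (m : ℕ) : List (ℕ × ℕ) := (List.range m).flatMap pairF

lemma starSeqOdd_eq (m : ℕ) : starSeqOdd m = ((1 : ℕ), (2 : ℕ)) :: (prepL m ++ pairsL m) := rfl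

lemma flat_mono (g : ℕ → List (ℕ × ℕ)) {j n : ℕ} (h : j ≤ n) :
    ((List.range j).flatMap g).Sublist ((List.range n).flatMap g) := by
  obtain ⟨r, rfl⟩ := Nat.exists_eq_add_of_le h
  rw [List.range_add, List.flatMap_append]
  exact List.sublist_append_left _ _

lemma flat_step (g : ℕ → List (ℕ × ℕ)) {j : ℕ} {S x : List (ℕ × ℕ)}
    (hS : S.Sublist ((List.range j).flatMap g)) (hx : x.Sublist (g j)) :
    (S ++ x).Sublist ((List.range (j + 1)).flatMap g) := by
  rw [List.range_succ, List.flatMap_append]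
  exact hS.append (by simpa using hx)

lemma pairF_eq {j : ℕ} (h : 1 ≤ j) :
    pairF (j - 1) = [((1 : ℕ), 2 * j + 1), ((1 : ℕ), 2 * j)] := by
  have h1 : 2 * (j - 1) + 3 = 2 * j + 1 := by omega
  have h2 : 2 * (j - 1) + 2 = 2 * j := by omega
  simp only [pairF, h1, h2]

lemma sub_first {j : ℕ} (hj : 1 ≤ j) : [((1 : ℕ), 2 * j + 1)].Sublist (pairF (j - 1)) := by
  rw [pairF_eq hj]
  exact List.Sublist.cons₂ _ (List.nil_sublist _)

lemma sub_second {j : ℕ} (hj : 1 ≤ j) : [((1 : ℕ), 2 * j)].Sublist (pairF (j - 1)) := by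
  rw [pairF_eq hj]
  exact List.Sublist.cons _ (List.Sublist.refl _)

lemma sub_both {j : ℕ} (hj : 1 ≤ j) :
    [((1 : ℕ), 2 * j + 1), ((1 : ℕ), 2 * j)].Sublist (pairF (j - 1)) := by
  rw [pairF_eq hj]

lemma chunkTo {j : ℕ} (hj : 1 ≤ j) {S x : List (ℕ × ℕ)}
    (hS : S.Sublist ((List.range (j - 1)).flatMap pairF)) (hx : x.Sublist (pairF (j - 1))) :
    (S ++ x).Sublist ((List.range j).flatMap pairF) := by
  have h := flat_step pairF hS hx
  rwa [show j - 1 + 1 = j by omega] at h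

lemma castTo {j n : ℕ} (h : j ≤ n) {S : List (ℕ × ℕ)}
    (hS : S.Sublist ((List.range j).flatMap pairF)) :
    S.Sublist ((List.range n).flatMap pairF) :=
  hS.trans (flat_mono pairF h)

lemma chunks1 {m j : ℕ} {x : List (ℕ × ℕ)} (hj : 1 ≤ j) (hm : j ≤ m)
    (hx : x.Sublist (pairF (j - 1))) : x.Sublist (pairsL m) :=
  castTo hm (chunkTo hj (List.nil_sublist _) hx)

lemma chunks2 {m j k : ℕ} {x y : List (ℕ × ℕ)} (hj : 1 ≤ j) (hjk : j < k) (hk : k ≤ m)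
    (hx : x.Sublist (pairF (j - 1))) (hy : y.Sublist (pairF (k - 1))) :
    (x ++ y).Sublist (pairsL m) :=
  castTo hk (chunkTo (by omega) (castTo (by omega)
    (chunkTo hj (List.nil_sublist _) hx)) hy)

lemma chunks3 {m j k l : ℕ} {x y z : List (ℕ × ℕ)} (hj : 1 ≤ j) (hjk : j < k) (hkl : k < l)
    (hl : l ≤ m) (hx : x.Sublist (pairF (j - 1))) (hy : y.Sublist (pairF (k - 1)))
    (hz : z.Sublist (pairF (l - 1))) :
    (x ++ y ++ z).Sublist (pairsL m) :=
  castTo hl (chunkTo (by omega) (castTo (by omega)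
    (chunkTo (by omega) (castTo (by omega)
      (chunkTo hj (List.nil_sublist _) hx)) hy)) hz)

lemma prep_single {m k : ℕ} (h2 : 2 ≤ k) (hk : k ≤ m) :
    [((1 : ℕ), 2 * k)].Sublist (prepL m) := by
  rw [List.singleton_sublist]
  refine List.mem_map.mpr ⟨k - 2, List.mem_range.mpr (by omega), ?_⟩
  have : 2 * (k - 2) + 4 = 2 * k := by omega
  rw [this]

lemma sub_assemble {m : ℕ} {S0 S1 S2 : List (ℕ × ℕ)}
    (h0 : S0.Sublist [((1 : ℕ), (2 : ℕ))]) (h1 : S1.Sublist (prepL m))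
    (h2 : S2.Sublist (pairsL m)) : (S0 ++ S1 ++ S2).Sublist (starSeqOdd m) := by
  rw [starSeqOdd_eq]
  exact ((h0.append h1).append h2).trans (by simp)

set_option maxHeartbeats 1000000 in
/-- The heart of the matter: the explicit routings. -/
lemma key (m : ℕ) (hm : 1 ≤ m) {a b : ℕ} (ha1 : 1 ≤ a) (ha2 : a ≤ 2 * m + 1)
    (hb1 : 1 ≤ b) (hb2 : b ≤ 2 * m + 1) (hab : a ≠ b) :
    ∃ S : List (ℕ × ℕ), S.Sublist (starSeqOdd m) ∧ netPerm S 1 = a ∧ netPerm S 2 = b := by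
  have hA : a = 1 ∨ a = 2 ∨ (∃ j, 2 ≤ j ∧ j ≤ m ∧ a = 2 * j) ∨
      (∃ j, 1 ≤ j ∧ j ≤ m ∧ a = 2 * j + 1) := by
    rcases Nat.even_or_odd a with ⟨j, hj⟩ | ⟨j, hj⟩
    · by_cases h2 : a = 2
      · exact Or.inr (Or.inl h2)
      · exact Or.inr (Or.inr (Or.inl ⟨j, by omega, by omega, by omega⟩))
    · by_cases h1 : a = 1
      · exact Or.inl h1
      · exact Or.inr (Or.inr (Or.inr ⟨j, by omega, by omega, by omega⟩))
  have hB : b = 1 ∨ b = 2 ∨ (∃ k, 2 ≤ k ∧ k ≤ m ∧ b = 2 * k) ∨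
      (∃ k, 1 ≤ k ∧ k ≤ m ∧ b = 2 * k + 1) := by
    rcases Nat.even_or_odd b with ⟨k, hk⟩ | ⟨k, hk⟩
    · by_cases h2 : b = 2
      · exact Or.inr (Or.inl h2)
      · exact Or.inr (Or.inr (Or.inl ⟨k, by omega, by omega, by omega⟩))
    · by_cases h1 : b = 1
      · exact Or.inl h1
      · exact Or.inr (Or.inr (Or.inr ⟨k, by omega, by omega, by omega⟩))
  rcases hA with rfl | rfl | ⟨j, hj2, hjm, rfl⟩ | ⟨j, hj1, hjm, rfl⟩
  · -- a = 1
    rcases hB with rfl | rfl | ⟨k, hk2, hkm, rfl⟩ | ⟨k, hk1, hkm, rfl⟩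
    · omega
    · exact ⟨[], List.nil_sublist _, by rw [netPerm_evL]; rfl, by rw [netPerm_evL]; rfl⟩
    · -- b = 2k even
      refine ⟨[(1,2), (1,2*k), (1,2)], ?_, ?_, ?_⟩
      · exact sub_assemble (List.Sublist.refl _) (prep_single hk2 hkm)
          (chunks1 (j := 1) le_rfl hm (List.Sublist.cons _ (List.Sublist.refl _)))
      · rw [netPerm_evL, evA (2) _, evC (2*k) (2) _ (by omega) (by omega), evB (2) _ (by omega)]; rfl
      · rw [netPerm_evL, evB (2) _ (by omega), evA (2*k) _, evC (2) (2*k) _ (by omega) (by omega)]; rfl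
    · -- b = 2k+1 odd
      by_cases hk : k = 1
      · subst hk
        refine ⟨[(1,2), (1,3), (1,2)], ?_, ?_, ?_⟩
        · exact sub_assemble (List.Sublist.refl _) (List.nil_sublist _)
            (chunks1 (j := 1) le_rfl hm (sub_both le_rfl))
        · rw [netPerm_evL, evA (2) _, evC (3) (2) _ (by omega) (by omega), evB (2) _ (by omega)]; rfl
        · rw [netPerm_evL, evB (2) _ (by omega), evA (3) _, evC (2) (3) _ (by omega) (by omega)]; rfl
      · -- k ≥ 2
        by_cases hkm' : k = m
        · subst hkm'
          refine ⟨[(1,2*k),(1,2),(1,2*k+1),(1,2*k)], ?_, ?_, ?_⟩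
          · exact sub_assemble (List.nil_sublist _) (prep_single (by omega) le_rfl)
              (chunks2 (j := 1) le_rfl (by omega) le_rfl
                (List.Sublist.cons _ (List.Sublist.refl _)) (sub_both (by omega)))
          · rw [netPerm_evL, evA (2*k) _, evC (2) (2*k) _ (by omega) (by omega), evC (2*k+1) (2*k) _ (by omega) (by omega), evB (2*k) _ (by omega)]; rfl
          · rw [netPerm_evL, evC (2*k) (2) _ (by omega) (by omega), evB (2) _ (by omega), evA (2*k+1) _, evC (2*k) (2*k+1) _ (by omega) (by omega)]; rfl
        · -- 2 ≤ k < m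
          refine ⟨[(1,2*m),(1,2),(1,2*k+1),(1,2*m)], ?_, ?_, ?_⟩
          · exact sub_assemble (List.nil_sublist _) (prep_single (by omega) le_rfl)
              (chunks3 (j := 1) le_rfl (by omega) (by omega) le_rfl
                (List.Sublist.cons _ (List.Sublist.refl _)) (sub_first (by omega))
                (sub_second (by omega)))
          · rw [netPerm_evL, evA (2*m) _, evC (2) (2*m) _ (by omega) (by omega), evC (2*k+1) (2*m) _ (by omega) (by omega), evB (2*m) _ (by omega)]; rfl
          · rw [netPerm_evL, evC (2*m) (2) _ (by omega) (by omega), evB (2) _ (by omega), evA (2*k+1) _, evC (2*m) (2*k+1) _ (by omega) (by omega)]; rfl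
  · -- a = 2
    rcases hB with rfl | rfl | ⟨k, hk2, hkm, rfl⟩ | ⟨k, hk1, hkm, rfl⟩
    · refine ⟨[(1,2)], ?_, ?_, ?_⟩
      · exact sub_assemble (List.Sublist.refl _) (List.nil_sublist _) (List.nil_sublist _)
      · rw [netPerm_evL, evA (2) _]; rfl
      · rw [netPerm_evL, evB (2) _ (by omega)]; rfl
    · omega
    · refine ⟨[(1,2), (1,2*k)], ?_, ?_, ?_⟩
      · exact sub_assemble (List.Sublist.refl _) (prep_single hk2 hkm) (List.nil_sublist _)
      · rw [netPerm_evL, evA (2) _, evC (2*k) (2) _ (by omega) (by omega)]; rfl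
      · rw [netPerm_evL, evB (2) _ (by omega), evA (2*k) _]; rfl
    · refine ⟨[(1,2), (1,2*k+1)], ?_, ?_, ?_⟩
      · exact sub_assemble (List.Sublist.refl _) (List.nil_sublist _)
          (chunks1 hk1 hkm (sub_first hk1))
      · rw [netPerm_evL, evA (2) _, evC (2*k+1) (2) _ (by omega) (by omega)]; rfl
      · rw [netPerm_evL, evB (2) _ (by omega), evA (2*k+1) _]; rfl
  · -- a = 2j even, j ≥ 2
    rcases hB with rfl | rfl | ⟨k, hk2, hkm, rfl⟩ | ⟨k, hk1, hkm, rfl⟩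
    · refine ⟨[(1,2*j),(1,2)], ?_, ?_, ?_⟩
      · exact sub_assemble (List.nil_sublist _) (prep_single hj2 hjm)
          (chunks1 (j := 1) le_rfl hm (List.Sublist.cons _ (List.Sublist.refl _)))
      · rw [netPerm_evL, evA (2*j) _, evC (2) (2*j) _ (by omega) (by omega)]; rfl
      · rw [netPerm_evL, evC (2*j) (2) _ (by omega) (by omega), evB (2) _ (by omega)]; rfl
    · refine ⟨[(1,2*j)], ?_, ?_, ?_⟩
      · exact sub_assemble (List.nil_sublist _) (prep_single hj2 hjm) (List.nil_sublist _)
      · rw [netPerm_evL, evA (2*j) _]; rfl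
      · rw [netPerm_evL, evC (2*j) (2) _ (by omega) (by omega)]; rfl
    · -- b = 2k, k ≠ j
      refine ⟨[(1,2*j),(1,2),(1,2*k)], ?_, ?_, ?_⟩
      · exact sub_assemble (List.nil_sublist _) (prep_single hj2 hjm)
          (chunks2 (j := 1) le_rfl hk2 hkm
            (List.Sublist.cons _ (List.Sublist.refl _)) (sub_second (by omega)))
      · rw [netPerm_evL, evA (2*j) _, evC (2) (2*j) _ (by omega) (by omega), evC (2*k) (2*j) _ (by omega) (by omega)]; rfl
      · rw [netPerm_evL, evC (2*j) (2) _ (by omega) (by omega), evB (2) _ (by omega), evA (2*k) _]; rfl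
    · -- b = 2k+1
      by_cases hk : k = 1
      · subst hk
        refine ⟨[(1,2),(1,3),(1,2),(1,2*j)], ?_, ?_, ?_⟩
        · exact sub_assemble (List.Sublist.refl _) (List.nil_sublist _)
            (chunks2 (j := 1) le_rfl (by omega) hjm (sub_both le_rfl) (sub_second (by omega)))
        · rw [netPerm_evL, evA (2) _, evC (3) (2) _ (by omega) (by omega), evB (2) _ (by omega), evA (2*j) _]; rfl
        · rw [netPerm_evL, evB (2) _ (by omega), evA (3) _, evC (2) (3) _ (by omega) (by omega), evC (2*j) (3) _ (by omega) (by omega)]; rfl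
      · refine ⟨[(1,2*j),(1,2),(1,2*k+1)], ?_, ?_, ?_⟩
        · exact sub_assemble (List.nil_sublist _) (prep_single hj2 hjm)
            (chunks2 (j := 1) le_rfl (by omega) hkm
              (List.Sublist.cons _ (List.Sublist.refl _)) (sub_first (by omega)))
        · rw [netPerm_evL, evA (2*j) _, evC (2) (2*j) _ (by omega) (by omega), evC (2*k+1) (2*j) _ (by omega) (by omega)]; rfl
        · rw [netPerm_evL, evC (2*j) (2) _ (by omega) (by omega), evB (2) _ (by omega), evA (2*k+1) _]; rfl
  · -- a = 2j+1 odd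
    rcases hB with rfl | rfl | ⟨k, hk2, hkm, rfl⟩ | ⟨k, hk1, hkm, rfl⟩
    · -- b = 1
      by_cases hj : j = 1
      · subst hj
        refine ⟨[(1,3),(1,2)], ?_, ?_, ?_⟩
        · exact sub_assemble (List.nil_sublist _) (List.nil_sublist _)
            (chunks1 (j := 1) le_rfl hm (sub_both le_rfl))
        · rw [netPerm_evL, evA (3) _, evC (2) (3) _ (by omega) (by omega)]; rfl
        · rw [netPerm_evL, evC (3) (2) _ (by omega) (by omega), evB (2) _ (by omega)]; rfl
      · refine ⟨[(1,2),(1,2*j),(1,2),(1,2*j+1),(1,2*j)], ?_, ?_, ?_⟩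
        · exact sub_assemble (List.Sublist.refl _) (prep_single (by omega) hjm)
            (chunks2 (j := 1) le_rfl (by omega) hjm
              (List.Sublist.cons _ (List.Sublist.refl _)) (sub_both (by omega)))
        · rw [netPerm_evL, evA (2) _, evC (2*j) (2) _ (by omega) (by omega), evB (2) _ (by omega), evA (2*j+1) _, evC (2*j) (2*j+1) _ (by omega) (by omega)]; rfl
        · rw [netPerm_evL, evB (2) _ (by omega), evA (2*j) _, evC (2) (2*j) _ (by omega) (by omega), evC (2*j+1) (2*j) _ (by omega) (by omega), evB (2*j) _ (by omega)]; rfl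
    · -- b = 2
      refine ⟨[(1,2*j+1)], ?_, ?_, ?_⟩
      · exact sub_assemble (List.nil_sublist _) (List.nil_sublist _)
          (chunks1 hj1 hjm (sub_first hj1))
      · rw [netPerm_evL, evA (2*j+1) _]; rfl
      · rw [netPerm_evL, evC (2*j+1) (2) _ (by omega) (by omega)]; rfl
    · -- b = 2k even
      by_cases hj : j = 1
      · subst hj
        refine ⟨[(1,3),(1,2),(1,2*k)], ?_, ?_, ?_⟩
        · exact sub_assemble (List.nil_sublist _) (List.nil_sublist _)
            (chunks2 (j := 1) le_rfl (by omega) hkm (sub_both le_rfl) (sub_second (by omega)))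
        · rw [netPerm_evL, evA (3) _, evC (2) (3) _ (by omega) (by omega), evC (2*k) (3) _ (by omega) (by omega)]; rfl
        · rw [netPerm_evL, evC (3) (2) _ (by omega) (by omega), evB (2) _ (by omega), evA (2*k) _]; rfl
      · refine ⟨[(1,2),(1,2*k),(1,2),(1,2*j+1)], ?_, ?_, ?_⟩
        · exact sub_assemble (List.Sublist.refl _) (prep_single hk2 hkm)
            (chunks2 (j := 1) le_rfl (by omega) hjm
              (List.Sublist.cons _ (List.Sublist.refl _)) (sub_first (by omega)))
        · rw [netPerm_evL, evA (2) _, evC (2*k) (2) _ (by omega) (by omega), evB (2) _ (by omega), evA (2*j+1) _]; rfl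
        · rw [netPerm_evL, evB (2) _ (by omega), evA (2*k) _, evC (2) (2*k) _ (by omega) (by omega), evC (2*j+1) (2*k) _ (by omega) (by omega)]; rfl
    · -- b = 2k+1 odd, k ≠ j
      by_cases hj : j = 1
      · subst hj
        -- a = 3, so k ≥ 2
        refine ⟨[(1,3),(1,2),(1,2*k+1)], ?_, ?_, ?_⟩
        · exact sub_assemble (List.nil_sublist _) (List.nil_sublist _)
            (chunks2 (j := 1) le_rfl (by omega) hkm (sub_both le_rfl) (sub_first (by omega)))
        · rw [netPerm_evL, evA (3) _, evC (2) (3) _ (by omega) (by omega), evC (2*k+1) (3) _ (by omega) (by omega)]; rfl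
        · rw [netPerm_evL, evC (3) (2) _ (by omega) (by omega), evB (2) _ (by omega), evA (2*k+1) _]; rfl
      · by_cases hk : k = 1
        · subst hk
          -- b = 3, j ≥ 2
          refine ⟨[(1,2),(1,3),(1,2),(1,2*j+1)], ?_, ?_, ?_⟩
          · exact sub_assemble (List.Sublist.refl _) (List.nil_sublist _)
              (chunks2 (j := 1) le_rfl (by omega) hjm (sub_both le_rfl) (sub_first (by omega)))
          · rw [netPerm_evL, evA (2) _, evC (3) (2) _ (by omega) (by omega), evB (2) _ (by omega), evA (2*j+1) _]; rfl
          · rw [netPerm_evL, evB (2) _ (by omega), evA (3) _, evC (2) (3) _ (by omega) (by omega), evC (2*j+1) (3) _ (by omega) (by omega)]; rfl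
        · rcases Nat.lt_or_ge k j with hkj | hjk
          · -- 2 ≤ k < j
            refine ⟨[(1,2*k),(1,2),(1,2*k+1),(1,2*k),(1,2*j+1)], ?_, ?_, ?_⟩
            · exact sub_assemble (List.nil_sublist _) (prep_single (by omega) (by omega))
                (chunks3 (j := 1) le_rfl (by omega) (by omega) hjm
                  (List.Sublist.cons _ (List.Sublist.refl _)) (sub_both (by omega))
                  (sub_first (by omega)))
            · rw [netPerm_evL, evA (2*k) _, evC (2) (2*k) _ (by omega) (by omega), evC (2*k+1) (2*k) _ (by omega) (by omega), evB (2*k) _ (by omega), evA (2*j+1) _]; rfl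
            · rw [netPerm_evL, evC (2*k) (2) _ (by omega) (by omega), evB (2) _ (by omega), evA (2*k+1) _, evC (2*k) (2*k+1) _ (by omega) (by omega), evC (2*j+1) (2*k+1) _ (by omega) (by omega)]; rfl
          · -- 2 ≤ j < k
            have hjk' : j < k := by omega
            refine ⟨[(1,2),(1,2*j),(1,2),(1,2*j+1),(1,2*j),(1,2*k+1)], ?_, ?_, ?_⟩
            · exact sub_assemble (List.Sublist.refl _) (prep_single (by omega) hjm)
                (chunks3 (j := 1) le_rfl (by omega) hjk' hkm
                  (List.Sublist.cons _ (List.Sublist.refl _)) (sub_both (by omega))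
                  (sub_first (by omega)))
            · rw [netPerm_evL, evA (2) _, evC (2*j) (2) _ (by omega) (by omega), evB (2) _ (by omega), evA (2*j+1) _, evC (2*j) (2*j+1) _ (by omega) (by omega), evC (2*k+1) (2*j+1) _ (by omega) (by omega)]; rfl
            · rw [netPerm_evL, evB (2) _ (by omega), evA (2*j) _, evC (2) (2*j) _ (by omega) (by omega), evC (2*j+1) (2*j) _ (by omega) (by omega), evB (2*j) _ (by omega), evA (2*k+1) _]; rfl

lemma starSeqOdd_mem {m : ℕ} {p : ℕ × ℕ} (hp : p ∈ starSeqOdd m) :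
    p = (1, 2) ∨ (∃ i, i < m - 1 ∧ p = (1, 2 * i + 4)) ∨
      (∃ i, i < m ∧ (p = (1, 2 * i + 3) ∨ p = (1, 2 * i + 2))) := by
  simp only [starSeqOdd, List.mem_cons, List.mem_append, List.mem_map, List.mem_flatMap,
    List.mem_range] at hp
  rcases hp with h | ⟨i, hi, h⟩ | ⟨i, hi, h⟩
  · exact Or.inl h
  · exact Or.inr (Or.inl ⟨i, hi, h.symm⟩)
  · simp only [List.mem_cons, List.mem_singleton, List.not_mem_nil, or_false] at h
    exact Or.inr (Or.inr ⟨i, hi, h⟩)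

/-- **Star construction for 2-reachability, odd case.** For every odd `n = 2m + 1`
with `m ≥ 1`, the sequence `(1,2)`, `(1,4), …, (1,2m)`,
`(1,3), (1,2), (1,5), (1,4), …, (1,2m+1), (1,2m)` of star transpositions is a
2-reachability network on `n` elements. -/
theorem starSeqOdd_two_reachability (m : ℕ) (hm : 1 ≤ m) :
    IsReachNet (2 * m + 1) 2 (starSeqOdd m) ∧ ∀ p ∈ starSeqOdd m, p.1 = 1 := by
  constructor
  · constructor
    · intro p hp
      rcases starSeqOdd_mem hp with rfl | ⟨i, hi, rfl⟩ | ⟨i, hi, rfl | rfl⟩ <;>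
        simp only [Finset.mem_Icc] <;> refine ⟨⟨?_, ?_⟩, ⟨?_, ?_⟩, ?_⟩ <;> simp <;> omega
    · intro x hx hinj
      have h0 := hx 0
      have h1 := hx 1
      rw [Finset.mem_Icc] at h0 h1
      have hab : x 0 ≠ x 1 := fun h => by
        have := hinj h
        simp at this
      obtain ⟨S, hS, e1, e2⟩ := key m hm h0.1 h0.2 h1.1 h1.2 hab
      refine ⟨S, hS, ?_⟩
      intro j
      fin_cases j
      · simpa using e1
      · simpa using e2
  · intro p hp
    rcases starSeqOdd_mem hp with rfl | ⟨i, hi, rfl⟩ | ⟨i, hi, rfl | rfl⟩ <;> rfl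
end

section
/- Let t ≥ 3 be an integer and let ε ∈ (0, 1/(t+1)). Then for all sufficiently large n, setting L = ⌊n^{1−ε}⌋, there exists a bipartite graph with parts A of size n − t and B of size L, in which every vertex of A has degree at most 2, such that every subset S ⊆ A with |S| ≤ t has at least |S| neighbours in B (equivalently, every set of at most t vertices of A is saturated by some matching). -/
open Finset

lemma counting_aux (t A L : ℕ) (ht : 1 ≤ t) (hL : t + 2 ≤ L)
    (hmain : ∀ k, 1 ≤ k → k ≤ t → t ^ (2 * t + 1) * A ^ k < L ^ (k + 1)) :
    ∃ h : Fin A → Fin L × Fin L, ∀ S : Finset (Fin A), S.card ≤ t →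
      S.card ≤ (S.biUnion fun a => ({(h a).1, (h a).2} : Finset (Fin L))).card := by
  classical
  set bad : Finset (Fin A → Fin L × Fin L) :=
    univ.filter (fun h => ∃ S : Finset (Fin A), S.card ≤ t ∧
      (S.biUnion fun a => ({(h a).1, (h a).2} : Finset (Fin L))).card < S.card) with hbad
  have hLpos : 0 < L := by omega
  -- the cover
  have hsub : bad ⊆ (Finset.Icc 1 t).biUnion (fun k =>
      (Finset.powersetCard k (univ : Finset (Fin A))).biUnion (fun S =>
        (Finset.powersetCard (k - 1) (univ : Finset (Fin L))).biUnion (fun U =>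
          Fintype.piFinset (fun a => if a ∈ S then U ×ˢ U else univ)))) := by
    intro h hh
    rw [hbad, mem_filter] at hh
    obtain ⟨-, S, hSt, hlt⟩ := hh
    have hS1 : 1 ≤ S.card := by omega
    have hW : (S.biUnion fun a => ({(h a).1, (h a).2} : Finset (Fin L))).card ≤ S.card - 1 := by
      omega
    obtain ⟨U, hWU, hUcard⟩ := Finset.exists_superset_card_eq hW
      (by simp only [Fintype.card_fin]; omega)
    refine mem_biUnion.2 ⟨S.card, by simp only [Finset.mem_Icc]; omega, ?_⟩
    refine mem_biUnion.2 ⟨S, by simp [Finset.mem_powersetCard], ?_⟩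
    refine mem_biUnion.2 ⟨U, by simp [Finset.mem_powersetCard, hUcard], ?_⟩
    rw [Fintype.mem_piFinset]
    intro a
    by_cases ha : a ∈ S
    · simp only [if_pos ha, Finset.mem_product]
      exact ⟨hWU (mem_biUnion.2 ⟨a, ha, by simp⟩), hWU (mem_biUnion.2 ⟨a, ha, by simp⟩)⟩
    · simp [ha]
  -- cardinality of cover pieces
  have hcover : ∀ (S : Finset (Fin A)) (U : Finset (Fin L)),
      (Fintype.piFinset (fun a => if a ∈ S then U ×ˢ U
          else (univ : Finset (Fin L × Fin L)))).card
        = (U.card * U.card) ^ S.card * (L * L) ^ (A - S.card) := by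
    intro S U
    rw [Fintype.card_piFinset, ← Finset.prod_mul_prod_compl S]
    have h1 : (∏ a ∈ S, (if a ∈ S then U ×ˢ U else (univ : Finset (Fin L × Fin L))).card)
        = (U.card * U.card) ^ S.card := by
      rw [Finset.prod_congr rfl (fun a ha => by rw [if_pos ha, Finset.card_product]),
        Finset.prod_const]
    have h2 : (∏ a ∈ Sᶜ, (if a ∈ S then U ×ˢ U else (univ : Finset (Fin L × Fin L))).card)
        = (L * L) ^ (A - S.card) := by
      rw [Finset.prod_congr rfl (fun a ha => by
        rw [if_neg (Finset.mem_compl.1 ha), Finset.card_univ, Fintype.card_prod,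
          Fintype.card_fin]), Finset.prod_const, Finset.card_compl, Fintype.card_fin]
    rw [h1, h2]
  -- bound the cardinality of bad
  have hb1 : bad.card ≤ ∑ k ∈ Finset.Icc 1 t,
      A.choose k * (L.choose (k - 1) * (((k - 1) * (k - 1)) ^ k * (L * L) ^ (A - k))) := by
    refine (Finset.card_le_card hsub).trans ?_
    refine (Finset.card_biUnion_le).trans (Finset.sum_le_sum fun k hk => ?_)
    refine (Finset.card_biUnion_le).trans ?_
    have : ∀ S ∈ Finset.powersetCard k (univ : Finset (Fin A)),
        ((Finset.powersetCard (k - 1) (univ : Finset (Fin L))).biUnion (fun U =>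
          Fintype.piFinset (fun a => if a ∈ S then U ×ˢ U else univ))).card
        ≤ L.choose (k - 1) * (((k - 1) * (k - 1)) ^ k * (L * L) ^ (A - k)) := by
      intro S hS
      rw [Finset.mem_powersetCard] at hS
      refine (Finset.card_biUnion_le).trans ?_
      have : ∀ U ∈ Finset.powersetCard (k - 1) (univ : Finset (Fin L)),
          (Fintype.piFinset (fun a => if a ∈ S then U ×ˢ U else univ)).card
            = ((k - 1) * (k - 1)) ^ k * (L * L) ^ (A - k) := by
        intro U hU
        rw [Finset.mem_powersetCard] at hU
        rw [hcover, hU.2, hS.2]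
      rw [Finset.sum_congr rfl this, Finset.sum_const, Finset.card_powersetCard,
        Finset.card_univ, Fintype.card_fin, smul_eq_mul]
    refine (Finset.sum_le_sum this).trans ?_
    rw [Finset.sum_const, Finset.card_powersetCard, Finset.card_univ, Fintype.card_fin,
      smul_eq_mul]
  -- per-term bound
  have hterm : ∀ k ∈ Finset.Icc 1 t,
      t * (A.choose k * (L.choose (k - 1) * (((k - 1) * (k - 1)) ^ k * (L * L) ^ (A - k))))
        ≤ (L * L) ^ A - 1 := by
    intro k hk
    rw [Finset.mem_Icc] at hk
    have hLLA : 1 ≤ (L * L) ^ A := Nat.one_le_pow _ _ (by positivity)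
    by_cases hkA : k ≤ A
    · have step1 : t * (A.choose k * (L.choose (k - 1) *
          (((k - 1) * (k - 1)) ^ k * (L * L) ^ (A - k))))
          ≤ t * (A ^ k * (L ^ (k - 1) * ((t * t) ^ t * (L * L) ^ (A - k)))) := by
        gcongr
        · exact Nat.choose_le_pow _ _
        · exact Nat.choose_le_pow _ _
        · exact Nat.mul_pos (by omega) (by omega)
        all_goals omega
      have step2 : t * (A ^ k * (L ^ (k - 1) * ((t * t) ^ t * (L * L) ^ (A - k))))
          = (t ^ (2 * t + 1) * A ^ k) * (L ^ (k - 1) * L ^ (2 * (A - k))) := by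
        rw [show (t * t) ^ t = t ^ (2 * t) by rw [← pow_two, ← pow_mul],
          show (L * L) ^ (A - k) = L ^ (2 * (A - k)) by rw [← pow_two, ← pow_mul],
          pow_succ]
        ring
      have step3 : (t ^ (2 * t + 1) * A ^ k) * (L ^ (k - 1) * L ^ (2 * (A - k)))
          < L ^ (k + 1) * (L ^ (k - 1) * L ^ (2 * (A - k))) := by
        have hpos : 0 < L ^ (k - 1) * L ^ (2 * (A - k)) := by positivity
        exact Nat.mul_lt_mul_of_lt_of_le (hmain k hk.1 hk.2) le_rfl hpos
      have step4 : L ^ (k + 1) * (L ^ (k - 1) * L ^ (2 * (A - k))) = (L * L) ^ A := by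
        rw [show (L * L) ^ A = L ^ (2 * A) by rw [← pow_two, ← pow_mul],
          ← pow_add, ← pow_add]
        congr 1
        omega
      have := step1.trans_lt (step2 ▸ step4 ▸ step3)
      omega
    · have : A.choose k = 0 := Nat.choose_eq_zero_of_lt (by omega)
      rw [this]
      simp only [Nat.zero_mul, Nat.mul_zero]
      omega
  have hb2 : t * bad.card < t * ((L * L) ^ A) := by
    calc t * bad.card ≤ t * ∑ k ∈ Finset.Icc 1 t,
        A.choose k * (L.choose (k - 1) * (((k - 1) * (k - 1)) ^ k * (L * L) ^ (A - k))) := by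
          exact Nat.mul_le_mul_left t hb1
      _ = ∑ k ∈ Finset.Icc 1 t, t * (A.choose k * (L.choose (k - 1) *
            (((k - 1) * (k - 1)) ^ k * (L * L) ^ (A - k)))) := by rw [Finset.mul_sum]
      _ ≤ ∑ k ∈ Finset.Icc 1 t, ((L * L) ^ A - 1) := Finset.sum_le_sum hterm
      _ = t * ((L * L) ^ A - 1) := by rw [Finset.sum_const, Nat.card_Icc, smul_eq_mul, Nat.add_sub_cancel]
      _ < t * ((L * L) ^ A) := by
          have hLLA : 1 ≤ (L * L) ^ A := Nat.one_le_pow _ _ (by positivity)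
          have : (L * L) ^ A - 1 < (L * L) ^ A := by omega
          exact Nat.mul_lt_mul_of_le_of_lt le_rfl this (by omega)
  have hcard : bad.card < Fintype.card (Fin A → Fin L × Fin L) := by
    have h1 : Fintype.card (Fin A → Fin L × Fin L) = (L * L) ^ A := by
      simp [Fintype.card_prod, Fintype.card_fin]
    rw [h1]
    exact Nat.lt_of_mul_lt_mul_left hb2
  have hex : ∃ h, h ∉ bad := by
    by_contra hc
    push_neg at hc
    have hsub2 : (univ : Finset (Fin A → Fin L × Fin L)) ⊆ bad := fun x _ => hc x
    have := Finset.card_le_card hsub2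
    rw [Finset.card_univ] at this
    omega
  obtain ⟨h, hh⟩ := hex
  refine ⟨h, fun S hSt => ?_⟩
  by_contra hlt
  exact hh (mem_filter.2 ⟨mem_univ _, S, hSt, not_le.1 hlt⟩)
/-- **The bipartite graph used in the proof of Theorem 3.** For every integer
`t ≥ 3` and `ε ∈ (0, 1/(t+1))`, for all sufficiently large `n`, with
`L = ⌊n^(1-ε)⌋`, there is a bipartite graph with parts `A` of size `n - t` and `B`
of size `L` (described by its neighbourhood map `E : A → Finset B`) in which every
vertex of `A` has degree at most 2, such that every subset `S ⊆ A` with `|S| ≤ t`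
has at least `|S|` neighbours in `B`. -/
theorem exists_bipartite_expander (t : ℕ) (ht : 3 ≤ t) (ε : ℝ)
    (hε0 : 0 < ε) (hε1 : ε < 1 / ((t : ℝ) + 1)) :
    ∃ N : ℕ, ∀ n : ℕ, N ≤ n →
      ∃ E : Fin (n - t) → Finset (Fin (Nat.floor ((n : ℝ) ^ ((1 : ℝ) - ε)))),
        (∀ a, (E a).card ≤ 2) ∧
        ∀ S : Finset (Fin (n - t)), S.card ≤ t → S.card ≤ (S.biUnion E).card := by
  have htR : (4 : ℝ) ≤ (t : ℝ) + 1 := by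
    have : (3:ℝ) ≤ (t:ℝ) := by exact_mod_cast ht
    linarith
  have htpos : (0:ℝ) < (t:ℝ) + 1 := by linarith
  have hε1' : ε * ((t:ℝ) + 1) < 1 := by
    rw [lt_div_iff₀ htpos] at hε1
    linarith
  have hεlt1 : ε < 1 := by
    have h14 : 1 / ((t:ℝ)+1) ≤ 1 / 4 := one_div_le_one_div_of_le (by norm_num) htR
    linarith
  have h1ε : (0:ℝ) < 1 - ε := by linarith
  set c : ℝ := 1 - ε * ((t:ℝ) + 1) with hc
  have hcpos : 0 < c := by rw [hc]; linarith
  have hev : ∀ᶠ x : ℝ in Filter.atTop,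
      1 ≤ x ∧ ((t:ℝ) + 3 ≤ x ^ ((1:ℝ) - ε)) ∧
        ((2:ℝ) ^ (t+1) * (t:ℝ) ^ (2*t+1) + 1 ≤ x ^ c) := by
    have h1 := Filter.eventually_ge_atTop (1:ℝ)
    have h2 := (tendsto_rpow_atTop h1ε).eventually_ge_atTop ((t:ℝ) + 3)
    have h3 := (tendsto_rpow_atTop hcpos).eventually_ge_atTop
      ((2:ℝ) ^ (t+1) * (t:ℝ) ^ (2*t+1) + 1)
    filter_upwards [h1, h2, h3] with x a b d using ⟨a, b, d⟩
  have hevn : ∀ᶠ n : ℕ in Filter.atTop,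
      1 ≤ (n:ℝ) ∧ ((t:ℝ) + 3 ≤ (n:ℝ) ^ ((1:ℝ) - ε)) ∧
        ((2:ℝ) ^ (t+1) * (t:ℝ) ^ (2*t+1) + 1 ≤ (n:ℝ) ^ c) :=
    tendsto_natCast_atTop_atTop.eventually hev
  obtain ⟨N, hN⟩ := Filter.eventually_atTop.1 hevn
  refine ⟨N, fun n hn => ?_⟩
  obtain ⟨hx1, hx2, hx3⟩ := hN n hn
  set x : ℝ := (n : ℝ) with hx
  set L : ℕ := Nat.floor (x ^ ((1:ℝ) - ε)) with hLdef
  have hxpos : (0:ℝ) < x := by linarith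
  have htR0 : (0:ℝ) ≤ (t:ℝ) := Nat.cast_nonneg t
  have hLge : t + 2 ≤ L := by
    apply Nat.le_floor
    push_cast
    linarith
  have hLn : L ≤ n := by
    have hxx : x ^ ((1:ℝ) - ε) ≤ x := by
      nth_rewrite 2 [← Real.rpow_one x]
      exact Real.rpow_le_rpow_of_exponent_le hx1 (by linarith)
    calc L ≤ Nat.floor x := Nat.floor_le_floor hxx
      _ = n := Nat.floor_natCast n
  have hLreal : x ^ ((1:ℝ) - ε) / 2 ≤ (L:ℝ) := by
    have h2le : (2:ℝ) ≤ x ^ ((1:ℝ) - ε) := by linarith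
    have hfl := Nat.sub_one_lt_floor (x ^ ((1:ℝ) - ε))
    rw [← hLdef] at hfl
    linarith
  -- main real inequality
  have hnt1 : (1:ℝ) ≤ (n:ℝ) ^ t := one_le_pow₀ hx1
  have e1 : (x ^ ((1:ℝ) - ε)) ^ (t+1) = x ^ (((1:ℝ) - ε) * ((t:ℝ) + 1)) := by
    rw [← Real.rpow_natCast (x ^ ((1:ℝ) - ε)) (t+1), ← Real.rpow_mul hxpos.le]
    congr 1
    push_cast
    ring
  have hC : x ^ (((1:ℝ) - ε) * ((t:ℝ) + 1)) = (n:ℝ) ^ t * x ^ c := by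
    rw [show ((1:ℝ) - ε) * ((t:ℝ) + 1) = (t:ℝ) + c by rw [hc]; ring,
      Real.rpow_add hxpos, Real.rpow_natCast]
  have hLpow : (x ^ ((1:ℝ) - ε) / 2) ^ (t+1) ≤ (L:ℝ) ^ (t+1) := by
    gcongr
  have e4 : x ^ (((1:ℝ) - ε) * ((t:ℝ) + 1)) = 2 ^ (t+1) * (x ^ ((1:ℝ) - ε) / 2) ^ (t+1) := by
    rw [div_pow, ← e1]
    field_simp
  have hkey : (t:ℝ) ^ (2*t+1) * (n:ℝ) ^ t < (L:ℝ) ^ (t+1) := by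
    have h2pos : (0:ℝ) < 2 ^ (t+1) := by positivity
    have hchain : 2 ^ (t+1) * ((t:ℝ) ^ (2*t+1) * (n:ℝ) ^ t) < 2 ^ (t+1) * (L:ℝ) ^ (t+1) := by
      have hr1 : (2:ℝ) ^ (t+1) * ((t:ℝ) ^ (2*t+1) * (n:ℝ) ^ t)
          = ((2:ℝ) ^ (t+1) * (t:ℝ) ^ (2*t+1)) * (n:ℝ) ^ t := by ring
      have hr2 : ((2:ℝ) ^ (t+1) * (t:ℝ) ^ (2*t+1) + 1) * (n:ℝ) ^ t
          = ((2:ℝ) ^ (t+1) * (t:ℝ) ^ (2*t+1)) * (n:ℝ) ^ t + (n:ℝ) ^ t := by ring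
      have hA : ((2:ℝ) ^ (t+1) * (t:ℝ) ^ (2*t+1) + 1) * (n:ℝ) ^ t ≤ x ^ c * (n:ℝ) ^ t :=
        mul_le_mul_of_nonneg_right hx3 (by positivity)
      have hB : x ^ c * (n:ℝ) ^ t ≤ 2 ^ (t+1) * (L:ℝ) ^ (t+1) := by
        calc x ^ c * (n:ℝ) ^ t = x ^ (((1:ℝ) - ε) * ((t:ℝ) + 1)) := by rw [hC]; ring
          _ = 2 ^ (t+1) * (x ^ ((1:ℝ) - ε) / 2) ^ (t+1) := e4
          _ ≤ 2 ^ (t+1) * (L:ℝ) ^ (t+1) := by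
              exact mul_le_mul_of_nonneg_left hLpow h2pos.le
      linarith
    exact lt_of_mul_lt_mul_left hchain h2pos.le
  have hkeyN : t ^ (2*t+1) * n ^ t < L ^ (t+1) := by exact_mod_cast hkey
  -- derive the hypothesis of counting_aux
  have hmain : ∀ k, 1 ≤ k → k ≤ t → t ^ (2*t+1) * (n - t) ^ k < L ^ (k+1) := by
    intro k hk1 hkt
    have hAn : n - t ≤ n := Nat.sub_le n t
    have base : t ^ (2*t+1) * (n - t) ^ k * L ^ (t - k) < L ^ (k+1) * L ^ (t - k) := by
      calc t ^ (2*t+1) * (n - t) ^ k * L ^ (t - k)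
          ≤ t ^ (2*t+1) * n ^ k * n ^ (t - k) := by gcongr
        _ = t ^ (2*t+1) * n ^ t := by rw [mul_assoc, ← pow_add]; congr 2; omega
        _ < L ^ (t+1) := hkeyN
        _ = L ^ (k+1) * L ^ (t - k) := by rw [← pow_add]; congr 1; omega
    exact Nat.lt_of_mul_lt_mul_right base
  obtain ⟨h, hh⟩ := counting_aux t (n - t) L (by omega) hLge hmain
  exact ⟨fun a => {(h a).1, (h a).2},
    fun a => (Finset.card_insert_le _ _).trans (by simp), hh⟩
end

section
/- For every n ≥ 2 there exists a 2-uniformity network on n elements of length 2n − 3 in which each lazy transposition is a star lazy transposition; an example is the sequence (1,2,1/2), (1,3,2/n), (1,2,1/2), (1,4,2/(n−1)), (1,2,1/2), …, (1,n,2/3), (1,2,1/2), which alternates the lazy transposition (1,2,1/2) with the lazy transpositions (1,k,2/(n−k+3)) for k = 3,…,n in increasing order. -/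
/-- Given a list of lazy transpositions `(a, b, p)` and a choice `f` of which of them
fire, the resulting permutation (the list is applied in order, first entry first). -/
def lazyOutcome (L : List (ℕ × ℕ × ℝ)) (f : Fin L.length → Bool) : Equiv.Perm ℕ :=
  (List.ofFn (fun i : Fin L.length =>
    if f i then Equiv.swap (L.get i).1 (L.get i).2.1 else 1)).reverse.prod

/-- The probability that exactly the lazy transpositions selected by `f` fire
(the lazy transpositions being independent). -/
def lazyWeight (L : List (ℕ × ℕ × ℝ)) (f : Fin L.length → Bool) : ℝ :=
  ∏ i : Fin L.length, if f i then (L.get i).2.2 else 1 - (L.get i).2.2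

/-- The entries of `L` are genuine lazy transpositions on `{1, …, n}`:
distinct points `a ≠ b` of `{1, …, n}` together with a probability `p ∈ [0,1]`. -/
def ValidLazy (n : ℕ) (L : List (ℕ × ℕ × ℝ)) : Prop :=
  ∀ p ∈ L, p.1 ∈ Finset.Icc 1 n ∧ p.2.1 ∈ Finset.Icc 1 n ∧ p.1 ≠ p.2.1 ∧
    0 ≤ p.2.2 ∧ p.2.2 ≤ 1

/-- `L` is a 2-uniformity network on `{1, …, n}`: for every ordered pair `(x, y)` of
distinct points of `{1, …, n}`, the probability that the composition of the
independent lazy transpositions maps `1 ↦ x` and `2 ↦ y` is `1/(n(n-1))`. -/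
def IsUnif2Net (n : ℕ) (L : List (ℕ × ℕ × ℝ)) : Prop :=
  ValidLazy n L ∧
  ∀ x y : ℕ, x ∈ Finset.Icc 1 n → y ∈ Finset.Icc 1 n → x ≠ y →
    (∑ f : Fin L.length → Bool,
      if lazyOutcome L f 1 = x ∧ lazyOutcome L f 2 = y then lazyWeight L f else 0)
      = 1 / ((n : ℝ) * ((n : ℝ) - 1))

/-- The sequence of star lazy transpositions
`(1,2,1/2), (1,3,2/n), (1,2,1/2), (1,4,2/(n-1)), …, (1,n,2/3), (1,2,1/2)`,
alternating `(1,2,1/2)` with `(1,k,2/(n-k+3))` for `k = 3, …, n` in increasing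
order. -/
noncomputable def unifSeq (n : ℕ) : List (ℕ × ℕ × ℝ) :=
  ((1 : ℕ), (2 : ℕ), (1 / 2 : ℝ)) ::
    (List.range (n - 2)).flatMap
      (fun i => [((1 : ℕ), i + 3, (2 : ℝ) / ((n : ℝ) - (i : ℝ))),
                 ((1 : ℕ), (2 : ℕ), (1 / 2 : ℝ))])

/-!
Follow the positions of the tokens `1` and `2`. After the first `2j + 1` lazy transpositions of
`unifSeq n` the pair `(σ 1, σ 2)` lies in `{1, …, j + 2}`, and its law depends only on how many
of its two coordinates lie in `{1, 2}`: it is `pairLaw n j`. The next two lazy transpositions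
`(1, j + 3, 2/(n - j))` and `(1, 2, 1/2)` turn `pairLaw n j` into `pairLaw n (j + 1)` (a finite
case check), and for `j = n - 2` all weights of `pairLaw` equal `1/(n(n - 1))`.
-/

noncomputable def lazyPairProb (L : List (ℕ × ℕ × ℝ)) (u v x y : ℕ) : ℝ :=
  ∑ f : Fin L.length → Bool,
    if lazyOutcome L f u = x ∧ lazyOutcome L f v = y then lazyWeight L f else 0

section LazyPairProb

variable (a b : ℕ) (p : ℝ) (L : List (ℕ × ℕ × ℝ))

lemma lazyOutcome_cons (c : Bool) (g : Fin L.length → Bool) (z : ℕ) :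
    lazyOutcome ((a, b, p) :: L) (Fin.cons c g) z
      = lazyOutcome L g (if c then Equiv.swap a b z else z) := by
  cases c <;> simp [lazyOutcome, List.ofFn_succ]

lemma lazyWeight_cons (c : Bool) (g : Fin L.length → Bool) :
    lazyWeight ((a, b, p) :: L) (Fin.cons c g) = (if c then p else 1 - p) * lazyWeight L g := by
  simp [lazyWeight, Fin.prod_univ_succ]

lemma lazyPairProb_nil (u v x y : ℕ) :
    lazyPairProb [] u v x y = if u = x ∧ v = y then 1 else 0 := by
  simp [lazyPairProb, lazyOutcome, lazyWeight]

lemma lazyPairProb_cons (u v x y : ℕ) :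
    lazyPairProb ((a, b, p) :: L) u v x y
      = p * lazyPairProb L (Equiv.swap a b u) (Equiv.swap a b v) x y
        + (1 - p) * lazyPairProb L u v x y := by
  change ∑ f : Fin (L.length + 1) → Bool, _ = _
  rw [← (Fin.consEquiv fun _ => Bool).sum_comp, Fintype.sum_prod_type,
    Fintype.sum_bool, lazyPairProb, lazyPairProb, Finset.mul_sum, Finset.mul_sum]
  congr 1 <;> refine Finset.sum_congr rfl fun g _ => ?_ <;>
    simp [Fin.consEquiv, lazyOutcome_cons, lazyWeight_cons, mul_ite]

lemma lazyPairProb_append_singleton (u v x y : ℕ) :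
    lazyPairProb (L ++ [(a, b, p)]) u v x y
      = p * lazyPairProb L u v (Equiv.swap a b x) (Equiv.swap a b y)
        + (1 - p) * lazyPairProb L u v x y := by
  induction L generalizing u v with
  | nil =>
    simp only [List.nil_append, lazyPairProb_cons, lazyPairProb_nil, Equiv.swap_apply_eq_iff]
  | cons t L ih =>
    obtain ⟨c, d, q⟩ := t
    simp only [List.cons_append, lazyPairProb_cons, ih]
    ring

end LazyPairProb

noncomputable def pairLaw (n j u v : ℕ) : ℝ :=
  if u = v ∨ u = 0 ∨ v = 0 ∨ j + 2 < u ∨ j + 2 < v then 0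
  else if u ≤ 2 ∧ v ≤ 2 then ((n : ℝ) - j) * ((n : ℝ) - j - 1) / (2 * n * (n - 1))
  else if u ≤ 2 ∨ v ≤ 2 then ((n : ℝ) - j) / (2 * n * (n - 1))
  else 1 / ((n : ℝ) * (n - 1))

lemma pairLaw_succ {n j : ℕ} (hj : j + 3 ≤ n) (u v : ℕ) :
    pairLaw n (j + 1) u v =
      (2 / ((n : ℝ) - j) * pairLaw n j (Equiv.swap 1 (j + 3) (Equiv.swap 1 2 u))
          (Equiv.swap 1 (j + 3) (Equiv.swap 1 2 v))
        + (1 - 2 / ((n : ℝ) - j)) * pairLaw n j (Equiv.swap 1 2 u) (Equiv.swap 1 2 v)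
        + 2 / ((n : ℝ) - j) * pairLaw n j (Equiv.swap 1 (j + 3) u) (Equiv.swap 1 (j + 3) v)
        + (1 - 2 / ((n : ℝ) - j)) * pairLaw n j u v) / 2 := by
  have hjn : (j : ℝ) + 3 ≤ n := by exact_mod_cast hj
  have hn0 : (n : ℝ) ≠ 0 := by linarith
  have hn1 : (n : ℝ) - 1 ≠ 0 := by linarith
  have hnj : (n : ℝ) - j ≠ 0 := by linarith
  obtain rfl | huv := eq_or_ne u v
  · simp [pairLaw]
  rcases (show u = 1 ∨ u = 2 ∨ (3 ≤ u ∧ u ≤ j + 2) ∨ u = j + 3 ∨ u = 0 ∨ j + 4 ≤ u by omega)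
    with rfl | rfl | hu | rfl | hu | hu <;>
  rcases (show v = 1 ∨ v = 2 ∨ (3 ≤ v ∧ v ≤ j + 2) ∨ v = j + 3 ∨ v = 0 ∨ j + 4 ≤ v by omega)
    with rfl | rfl | hv | rfl | hv | hv <;>
  simp (disch := omega) only [pairLaw, Equiv.swap_apply_left, Equiv.swap_apply_right,
    Equiv.swap_apply_of_ne_of_ne, if_pos, if_neg] <;>
  push_cast <;> field_simp <;> ring

-- `unifSeq n = unifPrefix n (n - 2)` holds by definition.
noncomputable def unifPrefix (n j : ℕ) : List (ℕ × ℕ × ℝ) :=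
  ((1 : ℕ), (2 : ℕ), (1 / 2 : ℝ)) ::
    (List.range j).flatMap
      (fun i => [((1 : ℕ), i + 3, (2 : ℝ) / ((n : ℝ) - (i : ℝ))),
                 ((1 : ℕ), (2 : ℕ), (1 / 2 : ℝ))])

lemma unifPrefix_succ (n j : ℕ) :
    unifPrefix n (j + 1)
      = unifPrefix n j ++ [(1, j + 3, 2 / ((n : ℝ) - j))] ++ [(1, 2, 1 / 2)] := by
  simp [unifPrefix, List.range_succ]

lemma lazyPairProb_unifPrefix {n j : ℕ} (hj : j + 2 ≤ n) (x y : ℕ) :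
    lazyPairProb (unifPrefix n j) 1 2 x y = pairLaw n j x y := by
  induction j generalizing x y with
  | zero =>
    have hn : (2 : ℝ) ≤ n := by exact_mod_cast hj
    have hn0 : (n : ℝ) ≠ 0 := by linarith
    have hn1 : (n : ℝ) - 1 ≠ 0 := by linarith
    simp only [unifPrefix, List.range_zero, List.flatMap_nil, lazyPairProb_cons,
      lazyPairProb_nil, Equiv.swap_apply_left, Equiv.swap_apply_right]
    rcases (show (x = 1 ∧ y = 2) ∨ (x = 2 ∧ y = 1) ∨ ¬ (x = 1 ∧ y = 2) ∧ ¬ (x = 2 ∧ y = 1)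
      by omega) with ⟨rfl, rfl⟩ | ⟨rfl, rfl⟩ | hxy <;>
    simp (disch := omega) only [pairLaw, if_pos, if_neg, and_self, ↓reduceIte] <;>
    field_simp <;> ring
  | succ j ih =>
    rw [unifPrefix_succ, lazyPairProb_append_singleton, lazyPairProb_append_singleton,
      lazyPairProb_append_singleton, ih (by omega), ih (by omega), ih (by omega), ih (by omega),
      pairLaw_succ (by omega)]
    ring

lemma pairLaw_of_add_two_eq {n j : ℕ} (hj : j + 2 = n) {x y : ℕ} (hx : x ∈ Finset.Icc 1 n)
    (hy : y ∈ Finset.Icc 1 n) (hxy : x ≠ y) : pairLaw n j x y = 1 / ((n : ℝ) * (n - 1)) := by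
  subst hj
  rw [Finset.mem_Icc] at hx hy
  have hj0 : (0 : ℝ) ≤ j := j.cast_nonneg
  have hn0 : (j : ℝ) + 2 ≠ 0 := by linarith
  have hn1 : (j : ℝ) + 2 - 1 ≠ 0 := by linarith
  unfold pairLaw
  split_ifs <;> first | omega | rfl | (push_cast; field_simp; ring)

lemma mem_unifSeq {n : ℕ} {t : ℕ × ℕ × ℝ} (ht : t ∈ unifSeq n) :
    t = (1, 2, 1 / 2) ∨ ∃ i < n - 2, t = (1, i + 3, 2 / ((n : ℝ) - i)) := by
  simp only [unifSeq, List.mem_cons, List.mem_flatMap, List.mem_range, List.not_mem_nil,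
    or_false] at ht
  grind

lemma validLazy_unifSeq {n : ℕ} (hn : 2 ≤ n) : ValidLazy n (unifSeq n) := by
  intro t ht
  rcases mem_unifSeq ht with rfl | ⟨i, hi, rfl⟩ <;> dsimp only <;> simp only [Finset.mem_Icc]
  · exact ⟨by omega, by omega, by omega, by norm_num, by norm_num⟩
  · have hin : (i : ℝ) + 2 < n := by exact_mod_cast (by omega : i + 2 < n)
    refine ⟨by omega, by omega, by omega, div_nonneg zero_le_two (by linarith), ?_⟩
    rw [div_le_one (by linarith)]
    linarith

lemma length_unifSeq {n : ℕ} (hn : 2 ≤ n) : (unifSeq n).length = 2 * n - 3 := by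
  simp only [unifSeq, List.length_cons, List.length_flatMap, List.length_nil, List.map_const',
    List.length_range, List.sum_replicate, smul_eq_mul]
  omega

/-- **Star 2-uniformity networks of length `2n - 3`.** For every `n ≥ 2` there is a
2-uniformity network on `n` elements of length `2n - 3` all of whose lazy
transpositions are star lazy transpositions; an example is the explicit sequence
`unifSeq n`. -/
theorem exists_two_uniformity_star_network (n : ℕ) (hn : 2 ≤ n) :
    (∃ L : List (ℕ × ℕ × ℝ), IsUnif2Net n L ∧ (∀ p ∈ L, p.1 = 1) ∧
      L.length = 2 * n - 3) ∧
    (IsUnif2Net n (unifSeq n) ∧ (∀ p ∈ unifSeq n, p.1 = 1) ∧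
      (unifSeq n).length = 2 * n - 3) := by
  have hnet : IsUnif2Net n (unifSeq n) := by
    refine ⟨validLazy_unifSeq hn, fun x y hx hy hxy => ?_⟩
    exact (lazyPairProb_unifPrefix (j := n - 2) (by omega) x y).trans
      (pairLaw_of_add_two_eq (by omega) hx hy hxy)
  have hstar : ∀ t ∈ unifSeq n, t.1 = 1 := fun t ht => by
    rcases mem_unifSeq ht with rfl | ⟨i, -, rfl⟩ <;> rfl
  exact ⟨⟨unifSeq n, hnet, hstar, length_unifSeq hn⟩, hnet, hstar, length_unifSeq hn⟩
end

section
/- If a sequence of independent lazy transpositions T_1,…,T_ℓ with parameters (a_1,b_1,p_1),…,(a_ℓ,b_ℓ,p_ℓ) is a transposition shuffle on n elements (i.e., the random permutation obtained by applying T_1 first, then T_2, and so on up to T_ℓ is uniformly distributed on S_n), then the sequence of transpositions (a_1,b_1),…,(a_ℓ,b_ℓ) is a permutation network on n elements; consequently, every transposition shuffle on n elements has length at least log₂(n!). -/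
/-- `L` is a permutation network on the ground set `{1, …, n}`: every entry is a
transposition of two distinct points of `{1, …, n}`, and every permutation of
`{1, …, n}` (i.e. every permutation of `ℕ` fixing the complement of `{1, …, n}`)
is the composition, in order, of some subsequence of `L`. -/
def IsPermNet (n : ℕ) (L : List (ℕ × ℕ)) : Prop :=
  (∀ p ∈ L, p.1 ∈ Finset.Icc 1 n ∧ p.2 ∈ Finset.Icc 1 n ∧ p.1 ≠ p.2) ∧
  ∀ σ : Equiv.Perm ℕ, (∀ x : ℕ, x ∉ Finset.Icc 1 n → σ x = x) →
    ∃ S : List (ℕ × ℕ), S.Sublist L ∧ netPerm S = σ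

open Classical in
/-- `L` is a transposition shuffle on `{1, …, n}`: the composition of the independent
lazy transpositions of `L`, applied in order, is uniformly distributed over the
permutations of `{1, …, n}` (i.e. every permutation of `ℕ` fixing the complement of
`{1, …, n}` occurs with probability `1/n!`). -/
def IsShuffle (n : ℕ) (L : List (ℕ × ℕ × ℝ)) : Prop :=
  ValidLazy n L ∧
  ∀ σ : Equiv.Perm ℕ, (∀ x : ℕ, x ∉ Finset.Icc 1 n → σ x = x) →
    (∑ f : Fin L.length → Bool,
      if lazyOutcome L f = σ then lazyWeight L f else 0)
      = 1 / (Nat.factorial n : ℝ)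

/-!
A transposition shuffle puts positive probability on every permutation of `{1, …, n}`, so each
of them is produced by some choice of which lazy transpositions fire; the transpositions that
fire form a subsequence of the underlying sequence whose composition is that permutation. Since
there are only `2 ^ ℓ` choices, this also gives `n! ≤ 2 ^ ℓ`.
-/

open Equiv

lemma List.prod_map_ite_one {α M : Type*} [Monoid M] (p : α → Bool) (s : α → M)
    (l : List α) :
    (l.map fun i => if p i then s i else 1).prod = ((l.filter p).map s).prod := by
  induction l with
  | nil => rfl
  | cons a t ih => by_cases h : p a <;> simp [h, ih]

lemma exists_sublist_netPerm_eq_lazyOutcome (L : List (ℕ × ℕ × ℝ))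
    (f : Fin L.length → Bool) :
    ∃ S : List (ℕ × ℕ), S.Sublist (L.map (fun q => (q.1, q.2.1))) ∧
      netPerm S = lazyOutcome L f := by
  let pair : Fin L.length → ℕ × ℕ := fun i => ((L.get i).1, (L.get i).2.1)
  refine ⟨((List.finRange L.length).filter f).map pair, ?_, ?_⟩
  · have hmap : L.map (fun q => (q.1, q.2.1)) = (List.finRange L.length).map pair := by
      conv_lhs => rw [← List.ofFn_get L]
      rw [List.map_ofFn, List.ofFn_eq_map]
      rfl
    exact hmap ▸ List.filter_sublist.map pair
  · simp only [netPerm, lazyOutcome, List.ofFn_eq_map, ← List.map_reverse, List.prod_map_ite_one,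
      List.map_map, ← List.filter_reverse]
    rfl

lemma IsShuffle.exists_lazyOutcome_eq {n : ℕ} {L : List (ℕ × ℕ × ℝ)} (hL : IsShuffle n L)
    {σ : Perm ℕ} (hσ : ∀ x : ℕ, x ∉ Finset.Icc 1 n → σ x = x) :
    ∃ f : Fin L.length → Bool, lazyOutcome L f = σ := by
  classical
  have hpos : (∑ f : Fin L.length → Bool,
      if lazyOutcome L f = σ then lazyWeight L f else 0) ≠ 0 := by
    rw [hL.2 σ hσ]
    positivity
  obtain ⟨f, -, hf⟩ := Finset.exists_ne_zero_of_sum_ne_zero hpos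
  exact ⟨f, by_contra fun h => hf (if_neg h)⟩

lemma factorial_card_le_two_pow_of_forall_mem_range {α : Type*} {m : ℕ} (s : Finset α)
    (g : (Fin m → Bool) → Perm α)
    (hg : ∀ σ : Perm α, (∀ x, x ∉ s → σ x = x) → σ ∈ Set.range g) :
    s.card.factorial ≤ 2 ^ m := by
  classical
  have hsurj (σ : Perm s) : ∃ f, g f = Perm.ofSubtype σ :=
    hg _ fun _ hx => Perm.ofSubtype_apply_of_not_mem σ hx
  choose F hF using hsurj
  have hF_inj : Function.Injective F := fun σ τ h =>
    Perm.ofSubtype_injective ((hF σ).symm.trans (h ▸ hF τ))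
  simpa [Fintype.card_perm] using Fintype.card_le_of_injective F hF_inj

/-- **Transposition shuffles give permutation networks.** If a sequence of independent
lazy transpositions with parameters `(a_k, b_k, p_k)` is a transposition shuffle on
`n` elements, then the underlying sequence of transpositions `(a_k, b_k)` is a
permutation network on `n` elements; consequently every transposition shuffle on `n`
elements has length at least `log₂ (n!)`. -/
theorem shuffle_gives_permutation_network (n : ℕ) (L : List (ℕ × ℕ × ℝ))
    (hL : IsShuffle n L) :
    IsPermNet n (L.map (fun q => (q.1, q.2.1))) ∧
    Real.logb 2 (Nat.factorial n : ℝ) ≤ (L.length : ℝ) := by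
  refine ⟨⟨?_, fun σ hσ => ?_⟩, ?_⟩
  · simp only [List.mem_map, forall_exists_index, and_imp]
    rintro _ q hq rfl
    obtain ⟨ha, hb, hab, -⟩ := hL.1 q hq
    exact ⟨ha, hb, hab⟩
  · obtain ⟨f, hf⟩ := hL.exists_lazyOutcome_eq hσ
    obtain ⟨S, hS, hSf⟩ := exists_sublist_netPerm_eq_lazyOutcome L f
    exact ⟨S, hS, hSf.trans hf⟩
  · have hcard : n.factorial ≤ 2 ^ L.length := by
      simpa using factorial_card_le_two_pow_of_forall_mem_range (Finset.Icc 1 n) (lazyOutcome L)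
        fun σ hσ => hL.exists_lazyOutcome_eq hσ
    rw [Real.logb_le_iff_le_rpow one_lt_two (by positivity), Real.rpow_natCast]
    exact_mod_cast hcard
end

section
/- For every n ≥ 1 and every t with 1 ≤ t ≤ n, every t-reachability network on n elements has length ℓ satisfying 2^ℓ ≥ n·(n−1)⋯(n−t+1); in particular, every 1-reachability network on n elements has length at least log₂ n. -/
lemma reachnet_key (n t : ℕ) (L : List (ℕ × ℕ)) (h : IsReachNet n t L) :
    Nat.descFactorial n t ≤ 2 ^ L.length := by
  classical
  obtain ⟨-, h2⟩ := h
  -- For each embedding `e : Fin t ↪ Icc 1 n`, choose a sublist realizing it.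
  have hx : ∀ e : Fin t ↪ (Finset.Icc 1 n),
      ∃ S : List (ℕ × ℕ), S.Sublist L ∧
        ∀ j : Fin t, netPerm S (j.val + 1) = (e j : ℕ) := by
    intro e
    exact h2 (fun j => (e j : ℕ)) (fun j => (e j).2)
      (fun a b hab => e.injective (Subtype.ext hab))
  let g : (Fin t ↪ (Finset.Icc 1 n)) → List (ℕ × ℕ) := fun e => (hx e).choose
  have hg1 : ∀ e, (g e).Sublist L := fun e => (hx e).choose_spec.1
  have hg2 : ∀ e (j : Fin t), netPerm (g e) (j.val + 1) = (e j : ℕ) :=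
    fun e => (hx e).choose_spec.2
  let f : (Fin t ↪ (Finset.Icc 1 n)) → (L.sublists.toFinset : Finset (List (ℕ × ℕ))) :=
    fun e => ⟨g e, by simp [List.mem_sublists, hg1 e]⟩
  have hf : Function.Injective f := by
    intro e1 e2 he
    have hgeq : g e1 = g e2 := congrArg Subtype.val he
    apply Function.Embedding.ext
    intro j
    apply Subtype.ext
    have := hg2 e1 j
    rw [hgeq, hg2 e2 j] at this
    exact this.symm
  have hcard := Fintype.card_le_of_injective f hf
  rw [Fintype.card_embedding_eq, Fintype.card_coe, Fintype.card_coe,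
    Nat.card_Icc, Fintype.card_fin] at hcard
  simp only [Nat.add_sub_cancel] at hcard
  calc Nat.descFactorial n t ≤ L.sublists.toFinset.card := hcard
    _ ≤ L.sublists.length := List.toFinset_card_le _
    _ = 2 ^ L.length := List.length_sublists _

/-- **Counting lower bound for t-reachability.** For every `n ≥ 1` and every
`1 ≤ t ≤ n`, every `t`-reachability network on `n` elements has length `ℓ` with
`2 ^ ℓ ≥ n (n-1) ⋯ (n - t + 1)`; in particular every 1-reachability network on `n`
elements has length at least `log₂ n`. -/
theorem t_reachability_counting_bound (n t : ℕ) (hn : 1 ≤ n) (ht : 1 ≤ t)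
    (htn : t ≤ n) :
    (∀ L : List (ℕ × ℕ), IsReachNet n t L →
      Nat.descFactorial n t ≤ 2 ^ L.length) ∧
    (∀ L : List (ℕ × ℕ), IsReachNet n 1 L →
      Real.logb 2 (n : ℝ) ≤ (L.length : ℝ)) := by
  refine ⟨fun L hL => reachnet_key n t L hL, fun L hL => ?_⟩
  have key := reachnet_key n 1 L hL
  rw [Nat.descFactorial_one] at key
  have h2 : (n : ℝ) ≤ (2 : ℝ) ^ (L.length : ℝ) := by
    rw [Real.rpow_natCast]
    exact_mod_cast key
  have hn' : (0 : ℝ) < n := by exact_mod_cast hn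
  exact (Real.logb_le_iff_le_rpow one_lt_two hn').mpr h2
end
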